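/- arXiv:math/0509022 — 5 statements merged into one kernel-verified Lean document; each statement's English description precedes it below -/
import Mathlib

section
/- Let G be a graph with minimum degree δ and no bad sets of size ≤ m. Suppose every set S of size 2 ≤ |S| ≤ m with |∂S| = δ|S| contains a nonempty subset A' of vertices, each of degree δ in G and with no neighbor in S. Then every set S of size at most m with |∂S| = δ|S| is an independent set all of whose vertices have degree δ in G. -/
open MeasureTheory Filter Finset
open scoped ENNReal Classical

noncomputable section

variable {V : Type*}

/-- The edge boundary of a vertex set `S`: edges with exactly one endpoint in `S`. -/
def edgeBoundary [Fintype V] [DecidableEq V] (G : SimpleGraph V) (S : Finset V) :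
    Finset (Sym2 V) :=
  G.edgeFinset.filter fun e => ∃ u v, e = s(u, v) ∧ u ∈ S ∧ v ∉ S

/-- The isoperimetric constant `i(G)`. -/
def isoConst [Fintype V] [DecidableEq V] (G : SimpleGraph V) : ℝ :=
  sInf { x : ℝ | ∃ S : Finset V, S.Nonempty ∧ 2 * S.card ≤ Fintype.card V ∧
      x = ((edgeBoundary G S).card : ℝ) / (S.card : ℝ) }

/-- The minimum degree of a graph (0 for the empty vertex set). -/
def minDeg [Fintype V] (G : SimpleGraph V) : ℕ :=
  sInf {k : ℕ | ∃ v : V, G.degree v = k}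

/-- The edges of `G` with both endpoints in `S` (edges of the induced subgraph). -/
def inducedEdges [Fintype V] [DecidableEq V] (G : SimpleGraph V) (S : Finset V) :
    Finset (Sym2 V) :=
  G.edgeFinset.filter fun e => ∀ v ∈ e, v ∈ S

/-- The simple graph on `Fin n` determined by an edge-indicator function. -/
def graphOf {n : ℕ} (ω : Sym2 (Fin n) → Bool) : SimpleGraph (Fin n) where
  Adj u v := u ≠ v ∧ ω s(u, v) = true
  symm := ⟨fun u v h => ⟨h.1.symm, by rw [Sym2.eq_swap]; exact h.2⟩⟩
  loopless := ⟨fun v h => h.1 rfl⟩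

/-- The Erdős–Rényi measure: each potential edge present independently with
probability `p` (truncated to `[0,1]`). -/
def graphMeasure (n : ℕ) (p : ℝ) : Measure (Sym2 (Fin n) → Bool) :=
  Measure.pi fun _ => (PMF.bernoulli (min (Real.toNNReal p) 1) (min_le_right _ _)).toMeasure

/-- `Pr[B(m,p) ≤ D]` for a binomial random variable. -/
def binomCDF (m : ℕ) (p : ℝ) (D : ℕ) : ℝ :=
  ∑ k ∈ Finset.range (D + 1), (m.choose k : ℝ) * p ^ k * (1 - p) ^ (m - k)

/-! Counting the boundary vertex by vertex, `|∂S| = ∑ u ∈ S, |N(u) \ S|`. A set `A' ⊆ S` of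
degree-`δ` vertices without neighbours in `S` therefore contributes exactly `δ|A'|` to `|∂S|`,
so `|∂(S \ A')| = δ|S \ A'|` again, and the induction on `|S|` ends at a single vertex, whose
boundary has size its degree. -/

namespace SimpleGraph

variable [Fintype V] [DecidableEq V] (G : SimpleGraph V)

theorem card_edgeBoundary_eq_sum (S : Finset V) :
    (edgeBoundary G S).card = ∑ u ∈ S, (G.neighborFinset u \ S).card := by
  rw [← card_sigma]
  symm
  refine card_bij (fun p _ => s(p.1, p.2)) ?_ ?_ ?_
  · rintro ⟨u, v⟩ huv
    simp only [mem_sigma, Finset.mem_sdiff, mem_neighborFinset] at huv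
    simp only [edgeBoundary, mem_filter, mem_edgeFinset, mem_edgeSet]
    exact ⟨huv.2.1, u, v, rfl, huv.1, huv.2.2⟩
  · rintro ⟨u, v⟩ huv ⟨u', v'⟩ huv' h
    simp only [mem_sigma, Finset.mem_sdiff] at huv huv'
    rcases Sym2.eq_iff.mp h with ⟨rfl, rfl⟩ | ⟨rfl, rfl⟩
    · rfl
    · exact absurd huv.1 huv'.2.2
  · intro e he
    obtain ⟨hadj, u, v, rfl, hu, hv⟩ := mem_filter.mp he
    exact ⟨⟨u, v⟩, by simpa [Finset.mem_sdiff, hu, hv] using hadj, rfl⟩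

theorem card_edgeBoundary_singleton (v : V) : (edgeBoundary G {v}).card = G.degree v := by
  rw [card_edgeBoundary_eq_sum, sum_singleton, ← card_neighborFinset_eq_degree]
  congr 1
  exact sdiff_eq_self_of_disjoint (disjoint_singleton_right.mpr (G.notMem_neighborFinset_self v))

/-- Every edge at `A` leaves `S`, and no edge of `∂(S \ A)` meets `A`. -/
theorem card_edgeBoundary_eq_sdiff_add_sum_degree {S A : Finset V} (hAS : A ⊆ S)
    (hA : ∀ a ∈ A, ∀ u ∈ S, ¬ G.Adj a u) :
    (edgeBoundary G S).card = (edgeBoundary G (S \ A)).card + ∑ a ∈ A, G.degree a := by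
  have h_out : ∀ a ∈ A, G.neighborFinset a \ S = G.neighborFinset a := fun a ha =>
    sdiff_eq_self_of_disjoint <| Finset.disjoint_left.mpr fun u hu huS =>
      hA a ha u huS ((G.mem_neighborFinset a u).mp hu)
  have h_rest : ∀ u ∈ S \ A, G.neighborFinset u \ (S \ A) = G.neighborFinset u \ S := by
    intro u hu
    ext v
    simp only [Finset.mem_sdiff, mem_neighborFinset, not_and, not_not]
    refine ⟨fun ⟨huv, hv⟩ => ⟨huv, fun hvS => ?_⟩, fun ⟨huv, hv⟩ => ⟨huv, fun hvS => absurd hvS hv⟩⟩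
    exact hA v (hv hvS) u (Finset.mem_sdiff.mp hu).1 huv.symm
  rw [card_edgeBoundary_eq_sum, card_edgeBoundary_eq_sum, ← sum_sdiff hAS]
  congr 1
  · exact sum_congr rfl fun u hu => by rw [h_rest u hu]
  · exact sum_congr rfl fun a ha => by rw [h_out a ha, card_neighborFinset_eq_degree]

theorem degree_eq_and_not_adj_of_card_edgeBoundary_eq_mul {d m : ℕ}
    (hsplit : ∀ S : Finset V, 2 ≤ S.card → S.card ≤ m →
      (edgeBoundary G S).card = d * S.card →
      ∃ A : Finset V, A ⊆ S ∧ A.Nonempty ∧ ∀ v ∈ A, G.degree v = d ∧ ∀ u ∈ S, ¬ G.Adj v u)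
    (S : Finset V) (hm : S.card ≤ m) (hS : (edgeBoundary G S).card = d * S.card) :
    (∀ v ∈ S, G.degree v = d) ∧ ∀ u ∈ S, ∀ v ∈ S, ¬ G.Adj u v := by
  induction S using Finset.strongInduction with
  | H S ih =>
  rcases lt_or_ge S.card 2 with hlt | h2
  · obtain h0 | h1 : S.card = 0 ∨ S.card = 1 := by omega
    · simp [card_eq_zero.mp h0]
    · obtain ⟨v, rfl⟩ := card_eq_one.mp h1
      rw [card_edgeBoundary_singleton, card_singleton, mul_one] at hS
      simp [hS]
  obtain ⟨A, hAS, hA_ne, hA⟩ := hsplit S h2 hm hS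
  have hrest : (edgeBoundary G (S \ A)).card = d * (S \ A).card := by
    have h := G.card_edgeBoundary_eq_sdiff_add_sum_degree hAS fun a ha => (hA a ha).2
    rw [sum_congr rfl fun a ha => (hA a ha).1, sum_const, smul_eq_mul, hS,
      ← card_sdiff_add_card_eq_card hAS, mul_add, mul_comm A.card] at h
    omega
  obtain ⟨hdeg, hindep⟩ :=
    ih (S \ A) (sdiff_ssubset hAS hA_ne) ((card_le_card sdiff_subset).trans hm) hrest
  refine ⟨fun v hv => ?_, fun u hu v hv => ?_⟩
  · by_cases hvA : v ∈ A
    · exact (hA v hvA).1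
    · exact hdeg v (Finset.mem_sdiff.mpr ⟨hv, hvA⟩)
  · by_cases huA : u ∈ A
    · exact (hA u huA).2 v hv
    by_cases hvA : v ∈ A
    · exact fun huv => (hA v hvA).2 u hu huv.symm
    · exact hindep u (Finset.mem_sdiff.mpr ⟨hu, huA⟩) v (Finset.mem_sdiff.mpr ⟨hv, hvA⟩)

end SimpleGraph

theorem tight_sets_independent_general [Fintype V] [DecidableEq V] (G : SimpleGraph V)
    (m : ℕ)
    (hA' : ∀ S : Finset V, 2 ≤ S.card → S.card ≤ m →
      (edgeBoundary G S).card = minDeg G * S.card →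
      ∃ A' : Finset V, A' ⊆ S ∧ A'.Nonempty ∧
        ∀ v ∈ A', G.degree v = minDeg G ∧ ∀ u ∈ S, ¬ G.Adj v u) :
    ∀ S : Finset V, S.Nonempty → S.card ≤ m →
      (edgeBoundary G S).card = minDeg G * S.card →
      (∀ v ∈ S, G.degree v = minDeg G) ∧ (∀ u ∈ S, ∀ v ∈ S, ¬ G.Adj u v) :=
  fun S _ hm hS => G.degree_eq_and_not_adj_of_card_edgeBoundary_eq_mul hA' S hm hS

/-- if `G` has no bad sets of size `≤ m`, and every `S` with
`2 ≤ |S| ≤ m` and `|∂S| = δ|S|` contains a nonempty `A'` of vertices of degree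
`δ` with no neighbor in `S`, then every `S` of size `≤ m` with `|∂S| = δ|S|` is
an independent set all of whose vertices have degree `δ`. -/
theorem tight_sets_independent [Fintype V] [DecidableEq V] (G : SimpleGraph V)
    (m : ℕ)
    (hnobad : ∀ T : Finset V, T.Nonempty → T.card ≤ m →
      minDeg G * T.card ≤ (edgeBoundary G T).card)
    (hA' : ∀ S : Finset V, 2 ≤ S.card → S.card ≤ m →
      (edgeBoundary G S).card = minDeg G * S.card →
      ∃ A' : Finset V, A' ⊆ S ∧ A'.Nonempty ∧
        ∀ v ∈ A', G.degree v = minDeg G ∧ ∀ u ∈ S, ¬ G.Adj v u) :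
    ∀ S : Finset V, S.Nonempty → S.card ≤ m →
      (edgeBoundary G S).card = minDeg G * S.card →
      (∀ v ∈ S, G.degree v = minDeg G) ∧ (∀ u ∈ S, ∀ v ∈ S, ¬ G.Adj u v) :=
  tight_sets_independent_general G m hA'

end
end

section
/- Fix 0 < ε < 1/2. For C = C(ε) sufficiently large and p = C log n / n, the random graph G(n,p) satisfies with probability tending to 1: for every set S of ⌊n/2⌋ vertices, |∂S|/|S| < (1/2 + ε)·δ(G), and consequently i(G) ≤ (1/2 + ε)·δ(G). -/
open MeasureTheory Filter Finset
open scoped ENNReal Classical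

noncomputable section

variable {V : Type*}

/-!
Write `p = C log n / n`, `θ = ε / 4` and `h(s) = (1 + s) log (1 + s) - s` for the Chernoff
rate. A degree is a sum of `n - 1` independent Bernoulli variables, so by the Chernoff bound
and a union bound over the vertices, `δ(G) > (1 - θ) p (n - 1)` fails with probability at most
`n · n ^ (-C h(-θ) / 2) → 0` once `C h(-θ) ≥ 4`. For `|S| = ⌊n/2⌋` the boundary is dominated
by a sum of `|S| (n - |S|) ≥ n² / 8` Bernoulli variables, so by Chernoff and a union bound
over the `2 ^ n` vertex sets, `|∂S| ≤ (1 + θ) p |S| (n - |S|)` fails with probability at most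
`2 ^ n exp (-C h(θ) n log n / 8) → 0`. On both events, since
`(1 + θ) (n - ⌊n/2⌋) ≤ (1/2 + ε) (1 - θ) (n - 1)` for large `n`, every such `S` has
`|∂S| < (1/2 + ε) δ(G) |S|`, and any one of them bounds the infimum `i(G)`.
-/

open Real Topology

section

variable [Fintype V] (G : SimpleGraph V)

lemma lt_minDeg [Nonempty V] {a : ℝ} (h : ∀ v, a < G.degree v) : a < minDeg G := by
  obtain ⟨v, hv⟩ : minDeg G ∈ {k | ∃ v, G.degree v = k} :=
    Nat.sInf_mem ⟨_, Classical.arbitrary V, rfl⟩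
  exact hv ▸ h v

variable [DecidableEq V]

lemma card_edgeBoundary_lt_minDeg_mul [Nonempty V] {a c : ℝ} (hc : 0 < c) {k : ℕ} (hk : 0 < k)
    (hdeg : ∀ v, a < G.degree v)
    (hcut : ∀ S : Finset V, #S = k → (#(edgeBoundary G S) : ℝ) ≤ c * a * k)
    (S : Finset V) (hS : #S = k) : (#(edgeBoundary G S) : ℝ) < c * minDeg G * #S := by
  rw [hS]
  calc (#(edgeBoundary G S) : ℝ) ≤ c * a * k := hcut S hS
    _ < c * minDeg G * k := by gcongr; exact lt_minDeg G hdeg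

lemma isoConst_le_div {S : Finset V} (hS : S.Nonempty) (hSV : 2 * #S ≤ Fintype.card V) :
    isoConst G ≤ #(edgeBoundary G S) / #S :=
  csInf_le ⟨0, by rintro _ ⟨S, -, -, rfl⟩; positivity⟩ ⟨S, hS, hSV, rfl⟩

lemma isoConst_le_of_card_edgeBoundary_lt {c : ℝ} (hV : 2 ≤ Fintype.card V)
    (h : ∀ S : Finset V, #S = Fintype.card V / 2 → (#(edgeBoundary G S) : ℝ) < c * #S) :
    isoConst G ≤ c := by
  obtain ⟨S, -, hS⟩ := exists_subset_card_eq (s := (univ : Finset V))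
    (show Fintype.card V / 2 ≤ #univ by rw [card_univ]; omega)
  have hSpos : 0 < #S := by omega
  calc isoConst G ≤ #(edgeBoundary G S) / #S :=
        isoConst_le_div G (card_pos.mp hSpos) (by omega)
    _ ≤ c := (div_le_iff₀ (by exact_mod_cast hSpos)).mpr (h S hS).le

end

lemma tendsto_measure_one_of_measureReal_compl_le {ι : Type*} {l : Filter ι} {Ω : ι → Type*}
    [∀ i, MeasurableSpace (Ω i)] {μ : ∀ i, Measure (Ω i)} [∀ i, IsProbabilityMeasure (μ i)]
    {s : ∀ i, Set (Ω i)} {b : ι → ℝ} (hb : Tendsto b l (𝓝 0))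
    (h : ∀ᶠ i in l, (μ i).real (s i)ᶜ ≤ b i) : Tendsto (fun i => μ i (s i)) l (𝓝 1) := by
  have hlower : ∀ᶠ i in l, 1 - b i ≤ (μ i).real (s i) := h.mono fun i hi => by
    have := measureReal_union_le (μ := μ i) (s i) (s i)ᶜ
    rw [Set.union_compl_self, probReal_univ] at this
    linarith
  have hreal : Tendsto (fun i => (μ i).real (s i)) l (𝓝 1) :=
    tendsto_of_tendsto_of_tendsto_of_le_of_le' (by simpa using tendsto_const_nhds.sub hb)
      tendsto_const_nhds hlower (Eventually.of_forall fun _ => measureReal_le_one)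
  simpa [ofReal_measureReal] using ENNReal.tendsto_ofReal hreal

namespace ErdosRenyi

variable {n : ℕ} {p : ℝ}

instance : IsProbabilityMeasure (graphMeasure n p) := by
  unfold graphMeasure; infer_instance

def edgeCount (T : Finset (Sym2 (Fin n))) (ω : Sym2 (Fin n) → Bool) : ℕ :=
  #{e ∈ T | ω e}

lemma pow_edgeCount_eq_prod (T : Finset (Sym2 (Fin n))) (ω : Sym2 (Fin n) → Bool) (R : ℝ) :
    R ^ edgeCount T ω = ∏ e, if e ∈ T ∧ ω e then R else 1 := by
  rw [edgeCount, ← prod_const, ← prod_filter]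
  congr 1
  ext e
  simp

lemma integral_bernoulli (hp0 : 0 ≤ p) (hp1 : p ≤ 1) (f : Bool → ℝ) :
    ∫ b, f b ∂(PMF.bernoulli (min (Real.toNNReal p) 1) (min_le_right _ _)).toMeasure
      = f true * p + f false * (1 - p) := by
  rw [integral_fintype .of_finite]
  simp [Measure.real, PMF.bernoulli_apply, min_eq_left (Real.toNNReal_le_one.mpr hp1), hp0,
    NNReal.coe_sub (Real.toNNReal_le_one.mpr hp1)]
  ring

lemma integral_pow_edgeCount (hp0 : 0 ≤ p) (hp1 : p ≤ 1) (T : Finset (Sym2 (Fin n))) (R : ℝ) :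
    ∫ ω, R ^ edgeCount T ω ∂graphMeasure n p = (R * p + (1 - p)) ^ #T := by
  simp_rw [pow_edgeCount_eq_prod, graphMeasure]
  rw [integral_fintype_prod_eq_prod (𝕜 := ℝ) fun e b => if e ∈ T ∧ b = true then R else 1,
    ← prod_const, ← Fintype.prod_ite_mem T]
  simp_rw [integral_bernoulli hp0 hp1]
  refine prod_congr rfl fun e _ => ?_
  by_cases he : e ∈ T <;> simp [he]

def chernoffRate (s : ℝ) : ℝ := (1 + s) * log (1 + s) - s

lemma chernoffRate_pos {s : ℝ} (hs : -1 < s) (hs0 : s ≠ 0) : 0 < chernoffRate s := by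
  have h1 : 0 < 1 + s := by linarith
  have h := log_lt_sub_one_of_pos (inv_pos.mpr h1) (by simpa using hs0)
  have key : -log (1 + s) * (1 + s) < -s := by
    calc -log (1 + s) * (1 + s) < ((1 + s)⁻¹ - 1) * (1 + s) := by
          rw [← log_inv]; exact mul_lt_mul_of_pos_right h h1
      _ = -s := by field_simp; ring
  rw [chernoffRate]
  linarith

lemma exp_div_rpow_eq_exp_chernoffRate {s : ℝ} (hs : -1 < s) (x : ℝ) :
    exp (s * x) / (1 + s) ^ ((1 + s) * x) = exp (-x * chernoffRate s) := by
  rw [rpow_def_of_pos (by linarith), ← exp_sub, chernoffRate]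
  ring_nf

lemma one_add_pow_le_exp {x : ℝ} (hx : -1 ≤ x) (k : ℕ) : (1 + x) ^ k ≤ exp (x * k) := by
  rw [mul_comm, exp_nat_mul]
  exact pow_le_pow_left₀ (by linarith) (by linarith [add_one_le_exp x]) k

lemma measureReal_le_of_rpow_le (hp0 : 0 ≤ p) (hp1 : p ≤ 1) (T : Finset (Sym2 (Fin n)))
    {R a : ℝ} (hR : 0 < R) {s : Set (Sym2 (Fin n) → Bool)}
    (hs : ∀ ω ∈ s, R ^ a ≤ R ^ (edgeCount T ω : ℝ)) :
    (graphMeasure n p).real s ≤ (R * p + (1 - p)) ^ #T / R ^ a := by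
  rw [le_div_iff₀ (rpow_pos_of_pos hR a), mul_comm, ← integral_pow_edgeCount hp0 hp1]
  calc R ^ a * (graphMeasure n p).real s
      ≤ R ^ a * (graphMeasure n p).real {ω | R ^ a ≤ R ^ edgeCount T ω} := by
        gcongr _ * ?_
        exact measureReal_mono fun ω hω => by simpa using hs ω hω
    _ ≤ _ := mul_meas_ge_le_integral_of_nonneg (ae_of_all _ fun ω => by positivity) .of_finite _

theorem measureReal_edgeCount_le_le (hp0 : 0 ≤ p) (hp1 : p ≤ 1) (T : Finset (Sym2 (Fin n)))
    {s : ℝ} (hs1 : -1 < s) (hs0 : s ≤ 0) :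
    (graphMeasure n p).real {ω | (edgeCount T ω : ℝ) ≤ (1 + s) * (p * #T)} ≤
      exp (-(p * #T) * chernoffRate s) := by
  have hR : 0 < 1 + s := by linarith
  calc _ ≤ ((1 + s) * p + (1 - p)) ^ #T / (1 + s) ^ ((1 + s) * (p * #T)) :=
        measureReal_le_of_rpow_le hp0 hp1 T hR fun ω hω =>
          rpow_le_rpow_of_exponent_ge hR (by linarith) hω
    _ ≤ exp (s * (p * #T)) / (1 + s) ^ ((1 + s) * (p * #T)) := by
        gcongr
        calc ((1 + s) * p + (1 - p)) ^ #T = (1 + s * p) ^ #T := by ring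
          _ ≤ exp (s * p * #T) := one_add_pow_le_exp (by nlinarith) _
          _ = exp (s * (p * #T)) := by ring_nf
    _ = _ := exp_div_rpow_eq_exp_chernoffRate hs1 _

theorem measureReal_le_edgeCount_le (hp0 : 0 ≤ p) (hp1 : p ≤ 1) (T : Finset (Sym2 (Fin n)))
    {s : ℝ} (hs0 : 0 ≤ s) {M : ℕ} (hTM : #T ≤ M) :
    (graphMeasure n p).real {ω | (1 + s) * (p * M) ≤ edgeCount T ω} ≤
      exp (-(p * M) * chernoffRate s) := by
  have hR : 1 ≤ 1 + s := by linarith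
  calc _ ≤ ((1 + s) * p + (1 - p)) ^ #T / (1 + s) ^ ((1 + s) * (p * M)) :=
        measureReal_le_of_rpow_le hp0 hp1 T (by linarith) fun ω hω =>
          rpow_le_rpow_of_exponent_le hR hω
    _ ≤ exp (s * (p * M)) / (1 + s) ^ ((1 + s) * (p * M)) := by
        gcongr
        calc ((1 + s) * p + (1 - p)) ^ #T = (1 + s * p) ^ #T := by ring
          _ ≤ exp (s * p * #T) := one_add_pow_le_exp (by nlinarith) _
          _ ≤ exp (s * (p * M)) := by
            rw [mul_assoc]; gcongr
    _ = _ := exp_div_rpow_eq_exp_chernoffRate (by linarith) _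

def incidentPairs (v : Fin n) : Finset (Sym2 (Fin n)) :=
  (univ.erase v).image (s(v, ·))

def crossingPairs (S : Finset (Fin n)) : Finset (Sym2 (Fin n)) :=
  (S ×ˢ Sᶜ).image fun uv => s(uv.1, uv.2)

lemma card_incidentPairs (v : Fin n) : #(incidentPairs v) = n - 1 := by
  rw [incidentPairs, card_image_of_injective _ fun _ _ h => Sym2.congr_right.mp h,
    card_erase_of_mem (mem_univ v), card_univ, Fintype.card_fin]

lemma degree_graphOf (ω : Sym2 (Fin n) → Bool) (v : Fin n) :
    (graphOf ω).degree v = edgeCount (incidentPairs v) ω := by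
  rw [← SimpleGraph.card_neighborFinset_eq_degree, edgeCount, incidentPairs, filter_image,
    card_image_of_injective _ fun _ _ h => Sym2.congr_right.mp h]
  congr 1
  ext u
  simp only [SimpleGraph.mem_neighborFinset, mem_filter, mem_erase, mem_univ, and_true]
  exact and_congr_left' ne_comm

lemma card_crossingPairs_le (S : Finset (Fin n)) : #(crossingPairs S) ≤ #S * (n - #S) := by
  calc #(crossingPairs S) ≤ #(S ×ˢ Sᶜ) := card_image_le
    _ = #S * (n - #S) := by rw [card_product, card_compl, Fintype.card_fin]

lemma card_edgeBoundary_graphOf_le (ω : Sym2 (Fin n) → Bool) (S : Finset (Fin n)) :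
    #(edgeBoundary (graphOf ω) S) ≤ edgeCount (crossingPairs S) ω := by
  refine card_le_card fun e he => ?_
  simp only [edgeBoundary, mem_filter, SimpleGraph.mem_edgeFinset] at he
  obtain ⟨hadj, u, v, rfl, hu, hv⟩ := he
  exact mem_filter.mpr ⟨mem_image.mpr ⟨(u, v), by simp [hu, hv], rfl⟩, hadj.2⟩

def lowDegreeEvent (n : ℕ) (a : ℝ) : Set (Sym2 (Fin n) → Bool) :=
  {ω | ∃ v, ((graphOf ω).degree v : ℝ) ≤ a}

def denseCutEvent (n : ℕ) (b : ℝ) : Set (Sym2 (Fin n) → Bool) :=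
  {ω | ∃ S : Finset (Fin n), #S = n / 2 ∧ b < #(edgeBoundary (graphOf ω) S)}

theorem measureReal_lowDegreeEvent_le (hp0 : 0 ≤ p) (hp1 : p ≤ 1) {θ : ℝ} (hθ0 : 0 ≤ θ)
    (hθ1 : θ < 1) :
    (graphMeasure n p).real (lowDegreeEvent n ((1 - θ) * (p * (n - 1 : ℕ)))) ≤
      n * exp (-(p * (n - 1 : ℕ)) * chernoffRate (-θ)) := by
  have hsub : lowDegreeEvent n ((1 - θ) * (p * (n - 1 : ℕ))) = ⋃ v : Fin n,
      {ω | (edgeCount (incidentPairs v) ω : ℝ) ≤ (1 + -θ) * (p * #(incidentPairs v))} := by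
    ext ω
    simp [lowDegreeEvent, degree_graphOf, card_incidentPairs, sub_eq_add_neg]
  calc _ ≤ ∑ v : Fin n, (graphMeasure n p).real
          {ω | (edgeCount (incidentPairs v) ω : ℝ) ≤ (1 + -θ) * (p * #(incidentPairs v))} :=
        hsub ▸ measureReal_iUnion_fintype_le _
    _ ≤ ∑ v : Fin n, exp (-(p * #(incidentPairs v)) * chernoffRate (-θ)) :=
        sum_le_sum fun v _ =>
          measureReal_edgeCount_le_le hp0 hp1 _ (by linarith) (by linarith)
    _ = _ := by simp [card_incidentPairs]

theorem measureReal_denseCutEvent_le (hp0 : 0 ≤ p) (hp1 : p ≤ 1) {θ : ℝ} (hθ0 : 0 ≤ θ)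
    {b : ℝ} (hb : (1 + θ) * (p * (n / 2 * (n - n / 2) : ℕ)) ≤ b) :
    (graphMeasure n p).real (denseCutEvent n b) ≤
      2 ^ n * exp (-(p * (n / 2 * (n - n / 2) : ℕ)) * chernoffRate θ) := by
  set M := n / 2 * (n - n / 2)
  have hsub : denseCutEvent n b ⊆ ⋃ S : Finset (Fin n),
      {ω | #S = n / 2 ∧ (1 + θ) * (p * M) ≤ edgeCount (crossingPairs S) ω} := by
    rintro ω ⟨S, hS, hbS⟩
    refine Set.mem_iUnion.mpr ⟨S, hS, hb.trans (hbS.le.trans ?_)⟩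
    exact_mod_cast card_edgeBoundary_graphOf_le ω S
  have hS : ∀ S : Finset (Fin n), (graphMeasure n p).real
      {ω | #S = n / 2 ∧ (1 + θ) * (p * M) ≤ edgeCount (crossingPairs S) ω} ≤
        exp (-(p * M) * chernoffRate θ) := by
    intro S
    by_cases hS : #S = n / 2
    · simp only [hS, true_and]
      exact measureReal_le_edgeCount_le hp0 hp1 _ hθ0
        ((card_crossingPairs_le S).trans_eq (by rw [hS]))
    · simpa [hS] using (exp_pos _).le
  calc _ ≤ ∑ S : Finset (Fin n), (graphMeasure n p).real
          {ω | #S = n / 2 ∧ (1 + θ) * (p * M) ≤ edgeCount (crossingPairs S) ω} :=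
        (measureReal_mono hsub).trans (measureReal_iUnion_fintype_le _)
    _ ≤ ∑ S : Finset (Fin n), exp (-(p * M) * chernoffRate θ) := sum_le_sum fun S _ => hS S
    _ = _ := by simp [Fintype.card_finset]

theorem compl_lowDegreeEvent_union_denseCutEvent_subset {c a : ℝ} (hc : 0 < c) (hn : 2 ≤ n) :
    (lowDegreeEvent n a ∪ denseCutEvent n (c * a * (n / 2 : ℕ)))ᶜ ⊆
      {ω | (∀ S : Finset (Fin n), #S = n / 2 →
          (#(edgeBoundary (graphOf ω) S) : ℝ) < c * minDeg (graphOf ω) * #S) ∧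
        isoConst (graphOf ω) ≤ c * minDeg (graphOf ω)} := by
  intro ω hω
  simp only [Set.mem_compl_iff, Set.mem_union, lowDegreeEvent, denseCutEvent, Set.mem_setOf_eq,
    not_or, not_exists, not_and, not_le, not_lt] at hω
  have : Nonempty (Fin n) := ⟨⟨0, by omega⟩⟩
  have hcut := card_edgeBoundary_lt_minDeg_mul (graphOf ω) hc (k := n / 2) (by omega) hω.1 hω.2
  exact ⟨hcut, isoConst_le_of_card_edgeBoundary_lt _ (by simpa using hn)
    (by simpa using hcut)⟩

lemma eventually_mul_log_div_le_one (C : ℝ) : ∀ᶠ n : ℕ in atTop, C * log n / n ≤ 1 := by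
  have h := ((isLittleO_log_id_atTop.tendsto_div_nhds_zero).comp
    tendsto_natCast_atTop_atTop).const_mul C
  rw [mul_zero] at h
  filter_upwards [h.eventually (eventually_le_nhds one_pos)] with n hn
  simpa [mul_div_assoc] using hn

lemma eventually_mul_sub_half_le {θ ε : ℝ} (hθ : -1 ≤ θ)
    (h : 1 + θ < (1 + 2 * ε) * (1 - θ)) :
    ∀ᶠ n : ℕ in atTop,
      (1 + θ) * (n - n / 2 : ℕ) ≤ (1 / 2 + ε) * (1 - θ) * (n - 1 : ℕ) := by
  filter_upwards [eventually_ge_atTop 1, tendsto_natCast_atTop_atTop.eventually_ge_atTop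
    (((1 + θ) + (1 + 2 * ε) * (1 - θ)) / ((1 + 2 * ε) * (1 - θ) - (1 + θ)))] with n hn hlarge
  have hhalf : 2 * ((n - n / 2 : ℕ) : ℝ) ≤ n + 1 := by norm_cast; omega
  rw [div_le_iff₀ (by linarith)] at hlarge
  rw [Nat.cast_sub hn, Nat.cast_one]
  nlinarith

lemma tendsto_lowDegree_bound {C κ : ℝ} (h : 4 ≤ C * κ) :
    Tendsto (fun n : ℕ => n * exp (-(C * log n / n * (n - 1 : ℕ)) * κ)) atTop (𝓝 0) := by
  refine squeeze_zero' (Eventually.of_forall fun n => by positivity) ?_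
    tendsto_natCast_atTop_atTop.inv_tendsto_atTop
  filter_upwards [eventually_ge_atTop 2] with n hn
  have hn' : (2 : ℝ) ≤ n := by exact_mod_cast hn
  have hlog : 0 ≤ log n := log_nonneg (by linarith)
  have hexp : 2 * log n ≤ C * log n / n * (n - 1 : ℕ) * κ := by
    rw [Nat.cast_sub (by omega), Nat.cast_one, div_mul_eq_mul_div, div_mul_eq_mul_div,
      le_div_iff₀ (by linarith)]
    nlinarith [mul_le_mul_of_nonneg_right h (mul_nonneg hlog (by linarith : (0 : ℝ) ≤ n - 1)),
      mul_nonneg hlog (by linarith : (0 : ℝ) ≤ n - 2)]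
  calc n * exp (-(C * log n / n * (n - 1 : ℕ)) * κ) ≤ n * exp (-(2 * log n)) := by
        gcongr; linarith
    _ = (n : ℝ)⁻¹ := by
        rw [exp_neg, two_mul, exp_add, exp_log (by linarith)]
        field_simp

lemma sq_le_eight_mul_half_mul {n : ℕ} (hn : 2 ≤ n) : n * n ≤ 8 * (n / 2 * (n - n / 2)) := by
  obtain ⟨k, rfl | rfl⟩ := Nat.even_or_odd' n
  · rw [Nat.mul_div_cancel_left k two_pos, show 2 * k - k = k by omega]; nlinarith
  · rw [show (2 * k + 1) / 2 = k by omega, show 2 * k + 1 - k = k + 1 by omega]; nlinarith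

lemma tendsto_denseCut_bound {C κ : ℝ} (h : 0 < C * κ) :
    Tendsto (fun n : ℕ => 2 ^ n * exp (-(C * log n / n * (n / 2 * (n - n / 2) : ℕ)) * κ))
      atTop (𝓝 0) := by
  have hlog : ∀ᶠ n : ℕ in atTop, 8 * (log 2 + 1) ≤ C * κ * log n :=
    ((tendsto_log_atTop.comp tendsto_natCast_atTop_atTop).const_mul_atTop h).eventually_ge_atTop _
  refine squeeze_zero' (Eventually.of_forall fun n => by positivity) ?_
    (tendsto_exp_neg_atTop_nhds_zero.comp tendsto_natCast_atTop_atTop)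
  filter_upwards [eventually_ge_atTop 2, hlog] with n hn hlogn
  set M := n / 2 * (n - n / 2)
  have hn' : (0 : ℝ) < n := by positivity
  have hM : (n : ℝ) / 8 ≤ M / n := by
    rw [div_le_div_iff₀ (by norm_num) hn']
    exact_mod_cast (sq_le_eight_mul_half_mul hn).trans_eq (mul_comm _ _)
  have hexp : n * log 2 + n ≤ C * log n / n * M * κ := by
    calc n * log 2 + n = 8 * (log 2 + 1) * (n / 8) := by ring
      _ ≤ C * κ * log n * (M / n) := by gcongr
      _ = C * log n / n * M * κ := by ring
  calc 2 ^ n * exp (-(C * log n / n * M) * κ) ≤ 2 ^ n * exp (-(n * log 2 + n)) := by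
        gcongr; linarith
    _ = exp (-n) := by
        rw [neg_add, exp_add, exp_neg, exp_nat_mul, exp_log two_pos]
        field_simp

end ErdosRenyi

open ErdosRenyi

/-- for `0 < ε < 1/2` and `C = C(ε)` sufficiently large, with
`p = C log n / n`, whp every set `S` of `⌊n/2⌋` vertices of `G(n,p)` satisfies
`|∂S|/|S| < (1/2 + ε)δ(G)`, and consequently `i(G) ≤ (1/2 + ε)δ(G)`. -/
theorem isoConst_half_upper (ε : ℝ) (hε0 : 0 < ε) (hε : ε < 1/2) :
    ∃ C₀ : ℝ, 0 < C₀ ∧ ∀ C : ℝ, C₀ ≤ C →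
      Tendsto (fun n : ℕ => graphMeasure n (C * Real.log n / n)
        {ω | (∀ S : Finset (Fin n), S.card = n / 2 →
            ((edgeBoundary (graphOf ω) S).card : ℝ) <
              (1/2 + ε) * (minDeg (graphOf ω) : ℝ) * (S.card : ℝ)) ∧
          isoConst (graphOf ω) ≤ (1/2 + ε) * (minDeg (graphOf ω) : ℝ)})
        atTop (nhds 1) := by
  have hκlow : 0 < chernoffRate (-(ε / 4)) := chernoffRate_pos (by linarith) (by linarith)
  have hκup : 0 < chernoffRate (ε / 4) := chernoffRate_pos (by linarith) (by linarith)
  refine ⟨4 / chernoffRate (-(ε / 4)), by positivity, fun C hC => ?_⟩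
  have hC4 : 4 ≤ C * chernoffRate (-(ε / 4)) := (div_le_iff₀ hκlow).mp hC
  have hC0 : 0 < C := (div_pos four_pos hκlow).trans_le hC
  have hbound := (tendsto_lowDegree_bound hC4).add (tendsto_denseCut_bound (mul_pos hC0 hκup))
  rw [add_zero] at hbound
  refine tendsto_measure_one_of_measureReal_compl_le hbound ?_
  filter_upwards [eventually_ge_atTop 2, eventually_mul_log_div_le_one C,
    eventually_mul_sub_half_le (θ := ε / 4) (ε := ε) (by linarith) (by nlinarith)]
    with n hn hp1 hhalf
  have hp0 : 0 ≤ C * log n / n := by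
    have : 0 ≤ log n := log_nonneg (by exact_mod_cast (by omega : 1 ≤ n))
    positivity
  set p := C * log n / n
  set a := (1 - ε / 4) * (p * (n - 1 : ℕ)) with ha
  have hb :
      (1 + ε / 4) * (p * (n / 2 * (n - n / 2) : ℕ)) ≤ (1 / 2 + ε) * a * (n / 2 : ℕ) := by
    have := mul_le_mul_of_nonneg_left hhalf (by positivity : 0 ≤ p * (n / 2 : ℕ))
    rw [ha, Nat.cast_mul]
    linarith
  calc _ ≤ (graphMeasure n p).real
          (lowDegreeEvent n a ∪ denseCutEvent n ((1 / 2 + ε) * a * (n / 2 : ℕ))) :=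
        measureReal_mono (Set.compl_subset_comm.mp
          (compl_lowDegreeEvent_union_denseCutEvent_subset (by linarith) hn))
    _ ≤ _ := (measureReal_union_le _ _).trans (add_le_add
        (measureReal_lowDegreeEvent_le hp0 hp1 (by linarith) (by linarith))
        (measureReal_denseCutEvent_le hp0 hp1 (by linarith) hb))
end
end

section
/- Let n be large, d = o(log n), r = (log n)/d, and p = (log n + (d−1) log r + 2d + ω(n))/n with ω(n) → ∞, ω(n) ≤ log log r. Then for a fixed vertex v in G(n,p), Pr[deg(v) = d−1] ≤ (1/n)·exp(−(1−o(1))(d + ω(n))); consequently Pr[deg(v) ≤ d−1] ≤ (d/n)·exp(−(1−o(1))(d+ω(n))), and with high probability δ(G(n,p)) ≥ d. -/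
open MeasureTheory Filter Finset
open scoped ENNReal Classical

noncomputable section

variable {V : Type*}

/-! The degree of `v` is binomial `B(n - 1, p)`. Write `k = d - 1`, `r = log n / d` and
`np = log n + k log r + 2d + w`. The Taylor bound `x^k / k! ≤ eˣ` at `x = np / r` gives
`C(n-1, k) p^k ≤ r^k e^{np/r}`, and `(1 - p)^{n-d} ≤ e^{-p(n-d)}`; since `log n = r d`, the
product is at most `n⁻¹ exp(-(d + w) + (k log r + 2d + w) / r + p d)`, which is
`n⁻¹ exp(-(1 - ε)(d + w))` with `ε = log r / r + 2 / r + p → 0`. As `p (n - d) ≥ d`, the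
binomial probabilities increase up to `k`, so `Pr[deg v ≤ k] ≤ d Pr[deg v = k]`. A union bound
over the `n` vertices leaves `d e^{-(1-ε)(d+w)} ≤ e^{-w/2} → 0` once `ε ≤ 1/2`. -/

open scoped NNReal Topology

section BoolProduct

variable {ι : Type*} [Fintype ι] (ν : Measure Bool) [IsProbabilityMeasure ν]

lemma pi_filter_eq (S T : Finset ι) (hT : T ⊆ S) :
    Measure.pi (fun _ : ι => ν) {ω | S.filter (fun i => ω i = true) = T} =
      ν {true} ^ #T * ν {false} ^ (#S - #T) := by
  have hset : {ω : ι → Bool | S.filter (fun i => ω i = true) = T} =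
      Set.univ.pi fun i => if i ∈ T then {true} else if i ∈ S then {false} else Set.univ := by
    ext ω
    simp only [Set.mem_ofPred_eq, Set.mem_univ_pi, Finset.ext_iff, Finset.mem_filter]
    refine forall_congr' fun i => ?_
    by_cases hiT : i ∈ T
    · simp [hiT, hT hiT]
    · by_cases hiS : i ∈ S <;> simp [hiT, hiS]
  rw [hset, Measure.pi_pi]
  simp only [apply_ite ν, measure_univ, Finset.prod_ite, Finset.prod_const_one, mul_one,
    Finset.prod_const]
  rw [Finset.filter_mem_eq_inter, Finset.univ_inter, ← Finset.card_sdiff_of_subset hT]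
  congr 3
  ext i
  simp only [Finset.mem_filter, Finset.mem_univ, Finset.mem_sdiff]
  tauto

lemma pi_card_filter_eq (S : Finset ι) (k : ℕ) :
    Measure.pi (fun _ : ι => ν) {ω | #(S.filter fun i => ω i = true) = k} =
      (#S).choose k * (ν {true} ^ k * ν {false} ^ (#S - k)) := by
  have hset : {ω : ι → Bool | #(S.filter fun i => ω i = true) = k} =
      ⋃ T ∈ S.powersetCard k, {ω | S.filter (fun i => ω i = true) = T} := by
    ext ω
    simp only [Set.mem_ofPred_eq, Set.mem_iUnion, Finset.mem_powersetCard, exists_prop]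
    exact ⟨fun h => ⟨_, ⟨Finset.filter_subset _ _, h⟩, rfl⟩, by rintro ⟨T, ⟨-, rfl⟩, rfl⟩; rfl⟩
  rw [hset, measure_biUnion_finset]
  · rw [Finset.sum_congr rfl fun T hT => by
      obtain ⟨hTS, hTk⟩ := Finset.mem_powersetCard.mp hT
      rw [pi_filter_eq ν S T hTS, hTk]]
    rw [Finset.sum_const, Finset.card_powersetCard, nsmul_eq_mul]
  · intro T _ T' _ hne
    exact Set.disjoint_left.mpr fun ω h h' => hne (h.symm.trans h')
  · exact fun _ _ => .of_discrete

end BoolProduct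

def binomTerm (m : ℕ) (p : ℝ) (k : ℕ) : ℝ :=
  m.choose k * p ^ k * (1 - p) ^ (m - k)

lemma binomCDF_eq_sum (m : ℕ) (p : ℝ) (D : ℕ) :
    binomCDF m p D = ∑ k ∈ range (D + 1), binomTerm m p k :=
  rfl

lemma binomTerm_le_succ {m j : ℕ} {p : ℝ} (hp1 : p ≤ 1) (hj : j < m)
    (h : (j + 1) * (1 - p) ≤ (m - j) * p) : binomTerm m p j ≤ binomTerm m p (j + 1) := by
  have hmj : (0 : ℝ) < m - j := by
    rw [sub_pos]; exact_mod_cast hj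
  have hp : 0 < p := by
    by_contra! hp
    nlinarith
  have hchoose : (m.choose (j + 1) : ℝ) * (j + 1) = m.choose j * (m - j) := by
    rw [← Nat.cast_sub hj.le]; exact_mod_cast Nat.choose_succ_right_eq m j
  have hpow : (1 - p) ^ (m - j) = (1 - p) ^ (m - (j + 1)) * (1 - p) := by
    rw [← pow_succ]; congr 1; omega
  have hratio :
      binomTerm m p j * ((m - j) * p) = binomTerm m p (j + 1) * ((j + 1) * (1 - p)) := by
    simp only [binomTerm, hpow]
    linear_combination (-(p ^ j) * p * (1 - p) ^ (m - (j + 1)) * (1 - p)) * hchoose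
  have hnonneg : 0 ≤ binomTerm m p (j + 1) := by
    have : 0 ≤ 1 - p := by linarith
    unfold binomTerm; positivity
  refine le_of_mul_le_mul_right ?_ (mul_pos hmj hp)
  rw [hratio]
  exact mul_le_mul_of_nonneg_left h hnonneg

lemma binomCDF_le_mul_binomTerm {m D : ℕ} {p : ℝ} (hp0 : 0 ≤ p) (hp1 : p ≤ 1)
    (h : (D : ℝ) ≤ (m - D : ℕ) * p) : binomCDF m p D ≤ (D + 1) * binomTerm m p D := by
  have hDm : D ≤ m := by
    by_contra! hmD
    rw [Nat.sub_eq_zero_of_le hmD.le, Nat.cast_zero, zero_mul, Nat.cast_nonpos] at h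
    omega
  have hmono : MonotoneOn (binomTerm m p) (Set.Iic D) := by
    refine monotoneOn_of_le_add_one Set.ordConnected_Iic fun j _ _ hj1 => ?_
    have hjD : j + 1 ≤ D := hj1
    refine binomTerm_le_succ hp1 (by omega) ?_
    have hjD' : (j : ℝ) + 1 ≤ D := by exact_mod_cast hjD
    have hmD : ((m - D : ℕ) : ℝ) ≤ m - j := by
      rw [Nat.cast_sub hDm]; linarith
    calc ((j : ℝ) + 1) * (1 - p) ≤ j + 1 := by nlinarith
      _ ≤ D := hjD'
      _ ≤ (m - D : ℕ) * p := h
      _ ≤ (m - j) * p := mul_le_mul_of_nonneg_right hmD hp0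
  rw [binomCDF_eq_sum]
  calc ∑ k ∈ range (D + 1), binomTerm m p k ≤ #(range (D + 1)) • binomTerm m p D :=
        sum_le_card_nsmul _ _ _ fun k hk =>
          hmono (Set.mem_Iic.mpr (Nat.lt_succ_iff.mp (mem_range.mp hk))) Set.self_mem_Iic
            (Nat.lt_succ_iff.mp (mem_range.mp hk))
    _ = (D + 1) * binomTerm m p D := by simp

lemma choose_mul_pow_le_pow_mul_exp (m k : ℕ) {x y a : ℝ} (hx : 0 ≤ x) (hy : 0 < y)
    (ha : m * x ≤ a) : m.choose k * x ^ k ≤ y ^ k * Real.exp (a / y) := by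
  have hmx : 0 ≤ m * x / y := by positivity
  calc m.choose k * x ^ k ≤ m ^ k / k.factorial * x ^ k := by
        gcongr; exact Nat.choose_le_pow_div k m
    _ = y ^ k * ((m * x / y) ^ k / k.factorial) := by
        rw [div_pow, mul_pow]; field_simp
    _ ≤ y ^ k * Real.exp (m * x / y) := by
        gcongr; exact Real.pow_div_factorial_le_exp _ hmx k
    _ ≤ y ^ k * Real.exp (a / y) := by
        gcongr

lemma one_sub_pow_le_exp_neg_mul {p : ℝ} (hp1 : p ≤ 1) (j : ℕ) :
    (1 - p) ^ j ≤ Real.exp (-(p * j)) := by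
  calc (1 - p) ^ j ≤ Real.exp (-p) ^ j :=
        pow_le_pow_left₀ (by linarith) (Real.one_sub_le_exp_neg p) j
    _ = Real.exp (-(p * j)) := by
        rw [← Real.exp_nat_mul]; ring_nf

@[simp]
lemma graphOf_adj {n : ℕ} (ω : Sym2 (Fin n) → Bool) (u v : Fin n) :
    (graphOf ω).Adj u v ↔ u ≠ v ∧ ω s(u, v) = true :=
  Iff.rfl

lemma degree_graphOf {n : ℕ} (ω : Sym2 (Fin n) → Bool) (v : Fin n) :
    (graphOf ω).degree v =
      #((⊤ : SimpleGraph (Fin n)).incidenceFinset v |>.filter fun e => ω e = true) := by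
  rw [← SimpleGraph.card_incidenceFinset_eq_degree]
  congr 1
  ext e
  induction e using Sym2.ind with
  | h a b =>
    simp only [SimpleGraph.mem_incidenceFinset, SimpleGraph.incidenceSet, Set.mem_ofPred_eq,
      SimpleGraph.mem_edgeSet, graphOf_adj, SimpleGraph.top_adj, Finset.mem_filter]
    tauto

namespace graphMeasure

variable {n : ℕ} {p : ℝ}

instance : IsProbabilityMeasure (graphMeasure n p) := by
  unfold graphMeasure; infer_instance

lemma degree_eq (hp0 : 0 ≤ p) (hp1 : p ≤ 1) (v : Fin n) (k : ℕ) :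
    (graphMeasure n p {ω | (graphOf ω).degree v = k}).toReal = binomTerm (n - 1) p k := by
  have hq : ((min p.toNNReal 1 : ℝ≥0) : ℝ) = p := by
    rw [min_eq_left (Real.toNNReal_le_one.mpr hp1), Real.coe_toNNReal _ hp0]
  simp only [degree_graphOf, graphMeasure]
  rw [pi_card_filter_eq, SimpleGraph.card_incidenceFinset_eq_degree,
    SimpleGraph.complete_graph_degree, Fintype.card_fin,
    PMF.toMeasure_apply_singleton _ _ (measurableSet_singleton _),
    PMF.toMeasure_apply_singleton _ _ (measurableSet_singleton _)]
  simp only [ENNReal.toReal_mul, ENNReal.toReal_pow, ENNReal.toReal_natCast, binomTerm]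
  rw [mul_assoc]
  -- `congr` closes the success factor by `hq`
  congr 3
  show (1 - ((min p.toNNReal 1 : ℝ≥0) : ℝ≥0∞)).toReal = 1 - p
  rw [ENNReal.toReal_sub_of_le (by simp) ENNReal.one_ne_top, ENNReal.coe_toReal, hq]
  simp

lemma degree_le (hp0 : 0 ≤ p) (hp1 : p ≤ 1) (v : Fin n) (D : ℕ) :
    (graphMeasure n p {ω | (graphOf ω).degree v ≤ D}).toReal = binomCDF (n - 1) p D := by
  have hset : {ω : Sym2 (Fin n) → Bool | (graphOf ω).degree v ≤ D} =
      ⋃ k ∈ range (D + 1), {ω | (graphOf ω).degree v = k} := by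
    ext ω
    simp
  rw [hset, measure_biUnion_finset, ENNReal.toReal_sum fun _ _ => measure_ne_top _ _,
    binomCDF_eq_sum]
  · exact sum_congr rfl fun k _ => degree_eq hp0 hp1 v k
  · intro a _ b _ hne
    exact Set.disjoint_left.mpr fun ω ha hb => hne (ha.symm.trans hb)
  · exact fun _ _ => .of_discrete

end graphMeasure

def tailError (r p : ℝ) : ℝ := Real.log r / r + 2 / r + p

lemma binomTerm_pred_exponent_le {L r d w p : ℝ} (hr : 1 ≤ r) (hw : 0 ≤ w) (hp : 0 ≤ p)
    (hLr : L = r * d) :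
    (d - 1) * Real.log r + (L + (d - 1) * Real.log r + 2 * d + w) / r
        - (L + (d - 1) * Real.log r + 2 * d + w) + p * d ≤
      -L - (1 - tailError r p) * (d + w) := by
  have hr0 : 0 < r := by linarith
  have hlog : 0 ≤ Real.log r := Real.log_nonneg hr
  have hsplit : (L + (d - 1) * Real.log r + 2 * d + w) / r =
      d + ((d - 1) * Real.log r + 2 * d + w) / r := by
    rw [hLr]; field_simp; ring
  have hnum : ((d - 1) * Real.log r + 2 * d + w) / r ≤
      Real.log r / r * (d + w) + 2 / r * (d + w) := by
    rw [div_mul_eq_mul_div, div_mul_eq_mul_div, ← add_div]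
    exact div_le_div_of_nonneg_right (by nlinarith) hr0.le
  have hpd : p * d ≤ p * (d + w) := by nlinarith
  rw [hsplit, tailError]
  linarith

lemma natCast_le_log_of_log_eq_mul {n d : ℕ} {r : ℝ} (hr : 1 ≤ r)
    (hLr : Real.log n = r * d) : (d : ℝ) ≤ Real.log n := by
  rw [hLr]; nlinarith [Nat.cast_nonneg (α := ℝ) d]

lemma le_of_log_eq_mul {n d : ℕ} {r : ℝ} (hr : 1 ≤ r) (hLr : Real.log n = r * d) : d ≤ n := by
  have := (natCast_le_log_of_log_eq_mul hr hLr).trans (Real.log_le_self (Nat.cast_nonneg n))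
  exact_mod_cast this

lemma binomTerm_pred_le {n d : ℕ} {r w p : ℝ} (hd : 1 ≤ d) (hr : 1 ≤ r)
    (hLr : Real.log n = r * d) (hw : 0 ≤ w) (hp0 : 0 ≤ p) (hp1 : p ≤ 1)
    (hP : p * n = Real.log n + (d - 1) * Real.log r + 2 * d + w) :
    binomTerm (n - 1) p (d - 1) ≤ 1 / n * Real.exp (-(1 - tailError r p) * (d + w)) := by
  set P := Real.log n + (d - 1) * Real.log r + 2 * d + w
  have hdn : d ≤ n := le_of_log_eq_mul hr hLr
  have hn : 0 < n := by omega
  have hexp : n - 1 - (d - 1) = n - d := by omega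
  have hchoose : ((n - 1).choose (d - 1) : ℝ) * p ^ (d - 1) ≤
      Real.exp ((d - 1) * Real.log r) * Real.exp (P / r) := by
    have hmP : ((n - 1 : ℕ) : ℝ) * p ≤ P := by
      rw [← hP, Nat.cast_sub hn]; nlinarith
    calc ((n - 1).choose (d - 1) : ℝ) * p ^ (d - 1) ≤ r ^ (d - 1) * Real.exp (P / r) :=
          choose_mul_pow_le_pow_mul_exp _ _ hp0 (by linarith) hmP
      _ = _ := by
          rw [← Real.rpow_natCast, Real.rpow_def_of_pos (by linarith), Nat.cast_sub hd]
          ring_nf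
  have hpow : (1 - p) ^ (n - d) ≤ Real.exp (-P + p * d) := by
    calc (1 - p) ^ (n - d) ≤ Real.exp (-(p * (n - d : ℕ))) := one_sub_pow_le_exp_neg_mul hp1 _
      _ = Real.exp (-P + p * d) := by rw [Nat.cast_sub hdn, ← hP]; ring_nf
  calc binomTerm (n - 1) p (d - 1)
      ≤ Real.exp ((d - 1) * Real.log r) * Real.exp (P / r) * Real.exp (-P + p * d) := by
        rw [binomTerm, hexp]
        exact mul_le_mul hchoose hpow (pow_nonneg (by linarith) _) (by positivity)
    _ = Real.exp ((d - 1) * Real.log r + P / r - P + p * d) := by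
        rw [← Real.exp_add, ← Real.exp_add]; ring_nf
    _ ≤ Real.exp (-Real.log n - (1 - tailError r p) * (d + w)) :=
        Real.exp_le_exp.mpr (binomTerm_pred_exponent_le hr hw hp0 hLr)
    _ = 1 / n * Real.exp (-(1 - tailError r p) * (d + w)) := by
        rw [sub_eq_add_neg, Real.exp_add, Real.exp_neg, Real.exp_log (by positivity)]
        ring_nf

lemma pred_le_sub_mul {n d : ℕ} {r w p : ℝ} (hd : 1 ≤ d) (hr : 1 ≤ r)
    (hLr : Real.log n = r * d) (hw : 0 ≤ w) (hp1 : p ≤ 1)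
    (hP : p * n = Real.log n + (d - 1) * Real.log r + 2 * d + w) :
    ((d - 1 : ℕ) : ℝ) ≤ ((n - 1 - (d - 1) : ℕ) : ℝ) * p := by
  have hdL := natCast_le_log_of_log_eq_mul hr hLr
  have hd' : (1 : ℝ) ≤ d := by exact_mod_cast hd
  rw [show n - 1 - (d - 1) = n - d by omega, Nat.cast_sub (le_of_log_eq_mul hr hLr),
    Nat.cast_sub hd, Nat.cast_one]
  have hlog : 0 ≤ (d - 1) * Real.log r := mul_nonneg (by linarith) (Real.log_nonneg hr)
  have hpd : p * d ≤ d := by nlinarith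
  linarith [show ((n : ℝ) - d) * p = p * n - p * d by ring]

lemma degree_tail_bounds {n d : ℕ} {w p : ℝ} (hd : 1 ≤ d) (hr : 1 ≤ Real.log n / d)
    (hw : 0 ≤ w) (hp0 : 0 ≤ p) (hp1 : p ≤ 1)
    (hp : p = (Real.log n + (d - 1) * Real.log (Real.log n / d) + 2 * d + w) / n) (v : Fin n) :
    (graphMeasure n p {ω | (graphOf ω).degree v = d - 1}).toReal ≤
        1 / n * Real.exp (-(1 - tailError (Real.log n / d) p) * (d + w)) ∧
      (graphMeasure n p {ω | (graphOf ω).degree v ≤ d - 1}).toReal ≤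
        d / n * Real.exp (-(1 - tailError (Real.log n / d) p) * (d + w)) := by
  have hLr : Real.log n = Real.log n / d * d := (div_mul_cancel₀ _ (by positivity)).symm
  have hn : (n : ℝ) ≠ 0 := Nat.cast_ne_zero.mpr (by have := le_of_log_eq_mul hr hLr; omega)
  have hP : p * n = Real.log n + (d - 1) * Real.log (Real.log n / d) + 2 * d + w := by
    rw [hp, div_mul_cancel₀ _ hn]
  have hterm := binomTerm_pred_le hd hr hLr hw hp0 hp1 hP
  refine ⟨(graphMeasure.degree_eq hp0 hp1 v _).trans_le hterm, ?_⟩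
  have hd1 : ((d - 1 : ℕ) : ℝ) + 1 = d := by rw [Nat.cast_sub hd]; simp
  rw [graphMeasure.degree_le hp0 hp1]
  calc binomCDF (n - 1) p (d - 1) ≤ (((d - 1 : ℕ) : ℝ) + 1) * binomTerm (n - 1) p (d - 1) :=
        binomCDF_le_mul_binomTerm hp0 hp1 (pred_le_sub_mul hd hr hLr hw hp1 hP)
    _ ≤ d * (1 / n * Real.exp (-(1 - tailError (Real.log n / d) p) * (d + w))) := by
        rw [hd1]; gcongr
    _ = _ := by ring

lemma tendsto_div_atTop_of_isLittleO {α : Type*} {l : Filter α} {f g : α → ℝ}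
    (hf : ∀ᶠ x in l, 0 < f x) (hg : ∀ᶠ x in l, 0 < g x) (h : f =o[l] g) :
    Tendsto (fun x => g x / f x) l atTop := by
  have hpos : ∀ᶠ x in l, f x / g x ∈ Set.Ioi 0 := by
    filter_upwards [hf, hg] with x hfx hgx using div_pos hfx hgx
  have hdiv : Tendsto (fun x => f x / g x) l (𝓝[>] 0) :=
    tendsto_nhdsWithin_iff.mpr ⟨h.tendsto_div_nhds_zero, hpos⟩
  refine hdiv.inv_tendsto_nhdsGT_zero.congr fun x => ?_
  simp only [Pi.inv_apply, inv_div]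

lemma tendsto_tailError {α : Type*} {l : Filter α} {r p : α → ℝ} (hr : Tendsto r l atTop)
    (hp : Tendsto p l (𝓝 0)) : Tendsto (fun x => tailError (r x) (p x)) l (𝓝 0) := by
  have hlog : Tendsto (fun x => Real.log (r x) / r x) l (𝓝 0) :=
    Real.isLittleO_log_id_atTop.tendsto_div_nhds_zero.comp hr
  have hinv : Tendsto (fun x => 2 / r x) l (𝓝 0) := by
    simpa [div_eq_mul_inv] using (tendsto_inv_atTop_zero.comp hr).const_mul 2
  simpa [tailError] using (hlog.add hinv).add hp

lemma edgeProb_bounds {n d : ℕ} {w p : ℝ} (hd : 1 ≤ d) (hr : 1 ≤ Real.log n / d)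
    (hw0 : 0 ≤ w) (hw : w ≤ Real.log (Real.log (Real.log n / d)))
    (hp : p = (Real.log n + (d - 1) * Real.log (Real.log n / d) + 2 * d + w) / n) :
    0 ≤ p ∧ p ≤ 5 * (Real.log n / n) := by
  set r := Real.log n / d
  have hd' : (1 : ℝ) ≤ d := by exact_mod_cast hd
  have hLr : Real.log n = r * d := (div_mul_cancel₀ _ (by positivity)).symm
  have hL := natCast_le_log_of_log_eq_mul hr hLr
  have hlog : 0 ≤ Real.log r := Real.log_nonneg hr
  have hlogr : Real.log r ≤ r := Real.log_le_self (by linarith)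
  have hloglog : Real.log (Real.log r) ≤ Real.log r := Real.log_le_self hlog
  have hnum : Real.log n + (d - 1) * Real.log r + 2 * d + w ≤ 5 * Real.log n := by nlinarith
  rw [hp, ← mul_div_assoc]
  exact ⟨div_nonneg (by nlinarith) (Nat.cast_nonneg n),
    div_le_div_of_nonneg_right hnum (Nat.cast_nonneg n)⟩

lemma tendsto_log_div_natCast_atTop : Tendsto (fun n : ℕ => Real.log n / n) atTop (𝓝 0) := by
  exact Real.isLittleO_log_id_atTop.tendsto_div_nhds_zero.comp tendsto_natCast_atTop_atTop

lemma self_le_exp_half {x : ℝ} (hx : 0 ≤ x) : x ≤ Real.exp (x / 2) := by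
  nlinarith [Real.quadratic_le_exp_of_nonneg (by positivity : 0 ≤ x / 2), sq_nonneg (x / 2 - 1)]

lemma mul_exp_neg_le_exp_neg_half {d w e : ℝ} (hd : 0 ≤ d) (hw : 0 ≤ w) (he : e ≤ 1 / 2) :
    d * Real.exp (-(1 - e) * (d + w)) ≤ Real.exp (-w / 2) := by
  calc d * Real.exp (-(1 - e) * (d + w)) ≤ Real.exp (d / 2) * Real.exp (-(d + w) / 2) :=
        mul_le_mul (self_le_exp_half hd) (Real.exp_le_exp.mpr (by nlinarith)) (by positivity)
          (by positivity)
    _ = Real.exp (-w / 2) := by rw [← Real.exp_add]; ring_nf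

lemma tendsto_graphMeasure_forall_le_degree {d : ℕ → ℕ} (hd1 : ∀ n, 1 ≤ d n) {w e p : ℕ → ℝ}
    (hw : Tendsto w atTop atTop) (he : Tendsto e atTop (𝓝 0))
    (hbound : ∀ᶠ n in atTop, ∀ v : Fin n,
      (graphMeasure n (p n) {ω | (graphOf ω).degree v ≤ d n - 1}).toReal ≤
        d n / n * Real.exp (-(1 - e n) * (d n + w n))) :
    Tendsto (fun n => graphMeasure n (p n) {ω | ∀ v : Fin n, d n ≤ (graphOf ω).degree v})
      atTop (𝓝 1) := by
  have hunion : ∀ n,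
      1 - ∑ v : Fin n, graphMeasure n (p n) {ω | (graphOf ω).degree v ≤ d n - 1} ≤
        graphMeasure n (p n) {ω | ∀ v : Fin n, d n ≤ (graphOf ω).degree v} := by
    intro n
    have hset : {ω : Sym2 (Fin n) → Bool | ∀ v, d n ≤ (graphOf ω).degree v} =
        (⋃ v, {ω | (graphOf ω).degree v ≤ d n - 1})ᶜ := by
      ext ω
      simp only [Set.mem_ofPred_eq, Set.mem_compl_iff, Set.mem_iUnion, not_exists]
      exact forall_congr' fun v => by have := hd1 n; omega
    rw [hset, prob_compl_eq_one_sub .of_discrete]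
    exact tsub_le_tsub_left (measure_iUnion_fintype_le _ _) 1
  have hsmall : ∀ᶠ n in atTop,
      ∑ v : Fin n, graphMeasure n (p n) {ω | (graphOf ω).degree v ≤ d n - 1} ≤
        ENNReal.ofReal (Real.exp (-w n / 2)) := by
    filter_upwards [hbound, he.eventually_le_const (by norm_num : (0 : ℝ) < 1 / 2),
      hw.eventually_ge_atTop 0, eventually_ge_atTop 1] with n hb he hw hn
    calc ∑ v : Fin n, graphMeasure n (p n) {ω | (graphOf ω).degree v ≤ d n - 1}
        ≤ ∑ _v : Fin n, ENNReal.ofReal (d n / n * Real.exp (-(1 - e n) * (d n + w n))) :=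
          sum_le_sum fun v _ =>
            (ENNReal.le_ofReal_iff_toReal_le (measure_ne_top _ _) (by positivity)).mpr (hb v)
      _ = ENNReal.ofReal (d n * Real.exp (-(1 - e n) * (d n + w n))) := by
          have hn' : (n : ℝ) ≠ 0 := by positivity
          rw [sum_const, card_univ, Fintype.card_fin, nsmul_eq_mul, ← ENNReal.ofReal_natCast,
            ← ENNReal.ofReal_mul (Nat.cast_nonneg n), ← mul_assoc, mul_div_cancel₀ _ hn']
      _ ≤ ENNReal.ofReal (Real.exp (-w n / 2)) :=
          ENNReal.ofReal_le_ofReal (mul_exp_neg_le_exp_neg_half (Nat.cast_nonneg _) hw he)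
  have hlim : Tendsto (fun n => 1 - ENNReal.ofReal (Real.exp (-w n / 2))) atTop (𝓝 1) := by
    have h := ENNReal.tendsto_ofReal (Real.tendsto_exp_atBot.comp
      ((tendsto_neg_atTop_atBot.comp hw).atBot_div_const two_pos))
    simpa using ENNReal.Tendsto.sub tendsto_const_nhds h (Or.inl ENNReal.one_ne_top)
  refine tendsto_of_tendsto_of_tendsto_of_le_of_le' hlim tendsto_const_nhds ?_
    (Eventually.of_forall fun n => prob_le_one)
  filter_upwards [hsmall] with n hn
  exact (tsub_le_tsub_left hn 1).trans (hunion n)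

/-- with `d = o(log n)`, `r = log n / d` and
`p = (log n + (d-1) log r + 2d + ω(n))/n` where `ω(n) → ∞`, `ω(n) ≤ log log r`:
for a fixed vertex `v`, `Pr[deg v = d-1] ≤ (1/n)·e^{-(1-o(1))(d+ω(n))}`, hence
`Pr[deg v ≤ d-1] ≤ (d/n)·e^{-(1-o(1))(d+ω(n))}`, and whp `δ(G(n,p)) ≥ d`. -/
theorem degree_upper_tail (d : ℕ → ℕ) (hd1 : ∀ n, 1 ≤ d n)
    (hd : (fun n : ℕ => (d n : ℝ)) =o[atTop] fun n : ℕ => Real.log n)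
    (w : ℕ → ℝ) (hw : Tendsto w atTop atTop)
    (hwle : ∀ᶠ n : ℕ in atTop, w n ≤ Real.log (Real.log (Real.log n / (d n : ℝ))))
    (p : ℕ → ℝ) (hp : ∀ n : ℕ, p n =
      (Real.log n + ((d n : ℝ) - 1) * Real.log (Real.log n / (d n : ℝ))
        + 2 * (d n : ℝ) + w n) / n) :
    (∃ e : ℕ → ℝ, Tendsto e atTop (nhds 0) ∧ ∀ᶠ n : ℕ in atTop, ∀ v : Fin n,
      (graphMeasure n (p n) {ω | (graphOf ω).degree v = d n - 1}).toReal ≤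
        (1 / n) * Real.exp (-(1 - e n) * ((d n : ℝ) + w n)) ∧
      (graphMeasure n (p n) {ω | (graphOf ω).degree v ≤ d n - 1}).toReal ≤
        ((d n : ℝ) / n) * Real.exp (-(1 - e n) * ((d n : ℝ) + w n))) ∧
    Tendsto (fun n : ℕ => graphMeasure n (p n)
      {ω | ∀ v : Fin n, d n ≤ (graphOf ω).degree v}) atTop (nhds 1) := by
  set r : ℕ → ℝ := fun n => Real.log n / d n
  have hlog : ∀ᶠ n : ℕ in atTop, 0 < Real.log n :=
    Real.tendsto_log_atTop.comp tendsto_natCast_atTop_atTop |>.eventually_gt_atTop 0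
  have hr : Tendsto r atTop atTop :=
    tendsto_div_atTop_of_isLittleO (.of_forall fun n => Nat.cast_pos.mpr (hd1 n)) hlog hd
  have hgood : ∀ᶠ n in atTop, 1 ≤ r n ∧ 0 ≤ w n ∧ w n ≤ Real.log (Real.log (r n)) :=
    (hr.eventually_ge_atTop 1).and ((hw.eventually_ge_atTop 0).and hwle)
  have hprob : ∀ᶠ n in atTop, 0 ≤ p n ∧ p n ≤ 5 * (Real.log n / n) := by
    filter_upwards [hgood] with n ⟨hr1, hw0, hwr⟩
    exact edgeProb_bounds (hd1 n) hr1 hw0 hwr (hp n)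
  have hp0 : Tendsto p atTop (𝓝 0) := by
    refine tendsto_of_tendsto_of_tendsto_of_le_of_le' tendsto_const_nhds ?_
      (hprob.mono fun n h => h.1) (hprob.mono fun n h => h.2)
    simpa using tendsto_log_div_natCast_atTop.const_mul 5
  have hbound := (hgood.and (hprob.and (hp0.eventually_le_const one_pos))).mono
    fun n ⟨⟨hr1, hw0, _⟩, ⟨hpn, _⟩, hp1⟩ => degree_tail_bounds (hd1 n) hr1 hw0 hpn hp1 (hp n)
  have he := tendsto_tailError hr hp0
  exact ⟨⟨_, he, hbound⟩,
    tendsto_graphMeasure_forall_le_degree hd1 hw he (hbound.mono fun n h v => (h v).2)⟩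

end
end

section
/- Let p = C log n/n for a constant C > 0. With probability 1 − o(n^{−1/5}), every induced subgraph of G(n,p) on k ≤ n^{1/4} vertices contains at most 2k edges. -/
open MeasureTheory Filter Finset
open scoped ENNReal Classical

noncomputable section

variable {V : Type*}

/-! A `k`-set spanning more than `2k` edges contains `2k + 1` present edges among its at most
`k²` pairs, so by a union bound some `k`-set with `k ≤ K` fails with probability at most
`∑_{k ≤ K} C(n,k) C(k², 2k+1) p^(2k+1) ≤ ∑_{k ≤ K} n^k k^(3k+1) p^(2k+1)`.
Write `n = x⁴` and `p = L / x⁴` with `L = C log n`. For `1 ≤ k ≤ x` the `k`-th term is at most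
`(L³ / x⁴) (L² / x)^(k-1) ≤ L³ / x⁴` as soon as `L² ≤ x`, so the sum over `k ≤ x` is
`O(L³ / x³) = O(log³ n · n^(-3/4)) = o(n^(-1/5))`. -/
theorem graphMeasure_forall_true (n : ℕ) (p : ℝ) (T : Finset (Sym2 (Fin n))) :
    graphMeasure n p {ω | ∀ e ∈ T, ω e = true} = min (ENNReal.ofReal p) 1 ^ #T := by
  have hset : {ω : Sym2 (Fin n) → Bool | ∀ e ∈ T, ω e = true}
      = (T : Set _).pi fun _ => {true} := by
    ext ω; simp
  rw [hset, graphMeasure, Measure.pi_pi_finset, prod_const,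
    PMF.toMeasure_apply_singleton _ _ (measurableSet_singleton _)]
  rfl

theorem inducedEdges_subset_sym2 {n : ℕ} (ω : Sym2 (Fin n) → Bool) (S : Finset (Fin n)) :
    inducedEdges (graphOf ω) S ⊆ S.sym2 := by
  intro e he
  simp only [inducedEdges, mem_filter] at he
  exact mem_sym2_iff.2 he.2

theorem eq_true_of_mem_inducedEdges {n : ℕ} {ω : Sym2 (Fin n) → Bool} {S : Finset (Fin n)}
    {e : Sym2 (Fin n)} (he : e ∈ inducedEdges (graphOf ω) S) : ω e = true := by
  simp only [inducedEdges, mem_filter, SimpleGraph.mem_edgeFinset] at he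
  induction e using Sym2.ind with
  | _ u v => exact he.1.2

theorem card_sym2_le_sq {α : Type*} (s : Finset α) : #s.sym2 ≤ #s ^ 2 := by
  rw [card_sym2, Nat.choose_two_right]
  exact Nat.div_le_of_le_mul (by simp only [Nat.add_sub_cancel]; nlinarith)

theorem graphMeasure_lt_card_inducedEdges_le (n : ℕ) (p : ℝ) (S : Finset (Fin n)) (m : ℕ) :
    graphMeasure n p {ω | m < #(inducedEdges (graphOf ω) S)}
      ≤ (#S.sym2).choose (m + 1) * min (ENNReal.ofReal p) 1 ^ (m + 1) := by
  have hcover : {ω | m < #(inducedEdges (graphOf ω) S)}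
      ⊆ ⋃ T ∈ S.sym2.powersetCard (m + 1), {ω | ∀ e ∈ T, ω e = true} := by
    intro ω (hω : m + 1 ≤ _)
    obtain ⟨T, hTsub, hTcard⟩ := exists_subset_card_eq hω
    exact Set.mem_biUnion
      (mem_powersetCard.2 ⟨hTsub.trans (inducedEdges_subset_sym2 ω S), hTcard⟩)
      fun e he => eq_true_of_mem_inducedEdges (hTsub he)
  calc graphMeasure n p {ω | m < #(inducedEdges (graphOf ω) S)}
      ≤ ∑ T ∈ S.sym2.powersetCard (m + 1), graphMeasure n p {ω | ∀ e ∈ T, ω e = true} :=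
        (measure_mono hcover).trans (measure_biUnion_finset_le _ _)
    _ = _ := by
        rw [sum_congr rfl fun T hT => by
          rw [graphMeasure_forall_true, (mem_powersetCard.1 hT).2],
          sum_const, card_powersetCard, nsmul_eq_mul]

theorem choose_sq_le (k : ℕ) : (k ^ 2).choose (2 * k + 1) ≤ k ^ (3 * k + 1) := by
  have hfact : k ^ (k + 1) ≤ (2 * k + 1).factorial :=
    calc k ^ (k + 1) ≤ (k + 1) ^ (k + 1) := Nat.pow_le_pow_left k.le_succ _
      _ ≤ k.factorial * (k + 1) ^ (k + 1) := Nat.le_mul_of_pos_left _ k.factorial_pos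
      _ ≤ (k + (k + 1)).factorial := Nat.factorial_mul_pow_le_factorial
      _ = (2 * k + 1).factorial := by ring_nf
  rcases Nat.eq_zero_or_pos k with rfl | hk
  · simp
  refine Nat.le_of_mul_le_mul_right ?_ (Nat.pow_pos hk : 0 < k ^ (k + 1))
  calc (k ^ 2).choose (2 * k + 1) * k ^ (k + 1)
      ≤ (k ^ 2).choose (2 * k + 1) * (2 * k + 1).factorial := Nat.mul_le_mul_left _ hfact
    _ = (k ^ 2).descFactorial (2 * k + 1) := by
        rw [Nat.descFactorial_eq_factorial_mul_choose, mul_comm]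
    _ ≤ (k ^ 2) ^ (2 * k + 1) := Nat.descFactorial_le_pow _ _
    _ = k ^ (3 * k + 1) * k ^ (k + 1) := by rw [← pow_mul, ← pow_add]; ring_nf

theorem graphMeasure_dense_le (n : ℕ) {p : ℝ} (hp : 0 ≤ p) (S : Finset (Fin n)) :
    graphMeasure n p {ω | 2 * #S < #(inducedEdges (graphOf ω) S)}
      ≤ ENNReal.ofReal ((#S : ℝ) ^ (3 * #S + 1) * p ^ (2 * #S + 1)) := by
  have hchoose : (#S.sym2).choose (2 * #S + 1) ≤ #S ^ (3 * #S + 1) :=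
    (Nat.choose_le_choose _ (card_sym2_le_sq S)).trans (choose_sq_le _)
  refine (graphMeasure_lt_card_inducedEdges_le n p S _).trans ?_
  rw [ENNReal.ofReal_mul (by positivity), ENNReal.ofReal_pow hp, ← Nat.cast_pow,
    ENNReal.ofReal_natCast]
  gcongr
  exact min_le_left _ _

def denseBound (n p : ℝ) (k : ℕ) : ℝ := n ^ k * (k : ℝ) ^ (3 * k + 1) * p ^ (2 * k + 1)

theorem graphMeasure_exists_dense_le (n : ℕ) {p : ℝ} (hp : 0 ≤ p) (K : ℕ) :
    graphMeasure n p
        {ω | ∃ S : Finset (Fin n), #S ≤ K ∧ 2 * #S < #(inducedEdges (graphOf ω) S)}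
      ≤ ENNReal.ofReal (∑ k ∈ range (K + 1), denseBound n p k) := by
  have hcover : {ω | ∃ S : Finset (Fin n), #S ≤ K ∧ 2 * #S < #(inducedEdges (graphOf ω) S)}
      ⊆ ⋃ k ∈ range (K + 1), ⋃ S ∈ powersetCard k univ,
          {ω | 2 * #S < #(inducedEdges (graphOf ω) S)} := by
    rintro ω ⟨S, hSK, hS⟩
    exact Set.mem_biUnion (mem_range.2 (Nat.lt_succ_of_le hSK))
      (Set.mem_biUnion (mem_powersetCard.2 ⟨subset_univ S, rfl⟩) hS)
  have hlayer : ∀ k ∈ range (K + 1),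
      graphMeasure n p (⋃ S ∈ powersetCard k univ, {ω | 2 * #S < #(inducedEdges (graphOf ω) S)})
        ≤ ENNReal.ofReal (denseBound n p k) := by
    intro k _
    calc _ ≤ ∑ S ∈ powersetCard k (univ : Finset (Fin n)),
            ENNReal.ofReal ((k : ℝ) ^ (3 * k + 1) * p ^ (2 * k + 1)) :=
          (measure_biUnion_finset_le _ _).trans (sum_le_sum fun S hS => by
            simpa only [(mem_powersetCard.1 hS).2] using graphMeasure_dense_le n hp S)
      _ = ENNReal.ofReal (n.choose k * ((k : ℝ) ^ (3 * k + 1) * p ^ (2 * k + 1))) := by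
          rw [sum_const, card_powersetCard, card_univ, Fintype.card_fin, nsmul_eq_mul,
            ENNReal.ofReal_mul (Nat.cast_nonneg _), ENNReal.ofReal_natCast]
      _ ≤ _ := by
          rw [← mul_assoc, denseBound]
          gcongr
          exact_mod_cast Nat.choose_le_pow n k
  calc _ ≤ _ := (measure_mono hcover).trans (measure_biUnion_finset_le _ _)
    _ ≤ _ := sum_le_sum hlayer
    _ = _ := (ENNReal.ofReal_sum_of_nonneg fun k _ =>
      mul_nonneg (by positivity) (pow_nonneg hp _)).symm

theorem denseBound_le {x L : ℝ} (hx : 1 ≤ x) (hL : 0 ≤ L) (hLx : L ^ 2 ≤ x) {k : ℕ}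
    (hk : (k : ℝ) ≤ x) : denseBound (x ^ 4) (L / x ^ 4) k ≤ L ^ 3 / x ^ 4 := by
  have hx0 : 0 < x := one_pos.trans_le hx
  rcases k with _ | j
  · simpa [denseBound] using div_nonneg (pow_nonneg hL 3) (pow_nonneg hx0.le 4)
  calc denseBound (x ^ 4) (L / x ^ 4) (j + 1)
      ≤ (x ^ 4) ^ (j + 1) * x ^ (3 * (j + 1) + 1) * (L / x ^ 4) ^ (2 * (j + 1) + 1) := by
        unfold denseBound; gcongr
    _ = L ^ 3 / x ^ 4 * (L ^ 2 / x) ^ j := by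
        rw [div_pow, div_pow, div_mul_div_comm, mul_div_assoc',
          div_eq_div_iff (by positivity) (by positivity)]
        ring
    _ ≤ L ^ 3 / x ^ 4 * 1 := by
        gcongr
        exact pow_le_one₀ (by positivity) ((div_le_one hx0).2 hLx)
    _ = L ^ 3 / x ^ 4 := mul_one _

theorem sum_denseBound_le {x L : ℝ} (hx : 1 ≤ x) (hL : 0 ≤ L) (hLx : L ^ 2 ≤ x) :
    ∑ k ∈ range (⌊x⌋₊ + 1), denseBound (x ^ 4) (L / x ^ 4) k ≤ 2 * L ^ 3 / x ^ 3 := by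
  have hfloor : (⌊x⌋₊ : ℝ) ≤ x := Nat.floor_le (by linarith)
  calc ∑ k ∈ range (⌊x⌋₊ + 1), denseBound (x ^ 4) (L / x ^ 4) k
      ≤ (⌊x⌋₊ + 1 : ℕ) * (L ^ 3 / x ^ 4) := by
        refine (sum_le_card_nsmul _ _ _ fun k hk => denseBound_le hx hL hLx ?_).trans_eq
          (by rw [card_range, nsmul_eq_mul])
        exact (Nat.cast_le.2 (Nat.lt_succ_iff.1 (mem_range.1 hk))).trans hfloor
    _ ≤ 2 * x * (L ^ 3 / x ^ 4) := by push_cast; gcongr; linarith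
    _ = 2 * L ^ 3 / x ^ 3 := by field_simp

theorem isLittleO_log_rpow_mul_rpow (r : ℝ) {a b : ℝ} (hab : a < b) :
    (fun x => Real.log x ^ r * x ^ a) =o[atTop] fun x => x ^ b := by
  refine ((isLittleO_log_rpow_rpow_atTop r (sub_pos.2 hab)).mul_isBigO
    (Asymptotics.isBigO_refl _ _)).congr' EventuallyEq.rfl ?_
  filter_upwards [eventually_gt_atTop 0] with x hx
  rw [← Real.rpow_add hx, sub_add_cancel]

theorem isLittleO_log_cube_div_rpow (C : ℝ) :
    (fun n : ℕ => 2 * (C * Real.log n) ^ 3 / ((n : ℝ) ^ (1 / 4 : ℝ)) ^ 3)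
      =o[atTop] fun n : ℕ => (n : ℝ) ^ (-(1 / 5 : ℝ)) := by
  have h := (isLittleO_log_rpow_mul_rpow 3 (by norm_num : -(3 / 4 : ℝ) < -(1 / 5))).const_mul_left
    (2 * C ^ (3 : ℕ))
  refine (h.comp_tendsto tendsto_natCast_atTop_atTop).congr' ?_ EventuallyEq.rfl
  filter_upwards with n
  have hn : (0 : ℝ) ≤ n := Nat.cast_nonneg n
  simp only [Function.comp_apply]
  rw [Real.rpow_ofNat, ← Real.rpow_natCast ((n : ℝ) ^ _) 3, ← Real.rpow_mul hn, Real.rpow_neg hn]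
  norm_num
  ring

theorem eventually_sq_mul_log_le_rpow (C : ℝ) :
    ∀ᶠ n : ℕ in atTop, (C * Real.log n) ^ 2 ≤ (n : ℝ) ^ (1 / 4 : ℝ) := by
  have h := (((isLittleO_log_rpow_rpow_atTop 2 (by norm_num : (0 : ℝ) < 1 / 4)).const_mul_left
    (C ^ 2)).comp_tendsto tendsto_natCast_atTop_atTop).eventuallyLE
  filter_upwards [h] with n hn
  simpa [Real.rpow_two, mul_pow, abs_of_nonneg, Real.rpow_nonneg] using hn

/-- for `p = C log n / n`, with probability `1 - o(n^{-1/5})`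
every induced subgraph of `G(n,p)` on `k ≤ n^{1/4}` vertices has at most `2k`
edges. -/
theorem sparse_induced_subgraphs (C : ℝ) (hC : 0 < C) :
    ∃ f : ℕ → ℝ, f =o[atTop] (fun n : ℕ => (n : ℝ) ^ (-(1/5 : ℝ))) ∧
      ∀ᶠ n : ℕ in atTop, graphMeasure n (C * Real.log n / n)
        {ω | ¬ ∀ S : Finset (Fin n), (S.card : ℝ) ≤ (n : ℝ) ^ ((1 : ℝ)/4) →
          (inducedEdges (graphOf ω) S).card ≤ 2 * S.card}
        ≤ ENNReal.ofReal (f n) := by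
  refine ⟨_, isLittleO_log_cube_div_rpow C, ?_⟩
  filter_upwards [eventually_sq_mul_log_le_rpow C, eventually_ge_atTop 1] with n hsmall hn
  set x : ℝ := (n : ℝ) ^ (1 / 4 : ℝ)
  have hx : 1 ≤ x := Real.one_le_rpow (by exact_mod_cast hn) (by norm_num)
  have hnx : (n : ℝ) = x ^ 4 := by
    rw [← Real.rpow_natCast, ← Real.rpow_mul (Nat.cast_nonneg n)]; norm_num
  have hL : 0 ≤ C * Real.log n := mul_nonneg hC.le (Real.log_natCast_nonneg n)
  have hsum := sum_denseBound_le hx hL hsmall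
  rw [← hnx] at hsum
  have hsub : {ω : Sym2 (Fin n) → Bool | ¬ ∀ S : Finset (Fin n), (#S : ℝ) ≤ x →
        #(inducedEdges (graphOf ω) S) ≤ 2 * #S}
      ⊆ {ω | ∃ S : Finset (Fin n), #S ≤ ⌊x⌋₊ ∧ 2 * #S < #(inducedEdges (graphOf ω) S)} := by
    intro ω hω
    push Not at hω
    obtain ⟨S, hSx, hS⟩ := hω
    exact ⟨S, Nat.le_floor hSx, hS⟩
  calc _ ≤ _ := measure_mono hsub
    _ ≤ _ := graphMeasure_exists_dense_le n (by positivity) _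
    _ ≤ _ := ENNReal.ofReal_le_ofReal hsum

end
end

section
/- Let p = (log n + (d−1)log r − (2d+ω(n)))/n with d = o(log n), r = (log n)/d. Then with probability 1 − o(n^{−1/5}), every vertex set S of G(n,p) with n/log n ≤ |S| ≤ n/2 satisfies |∂S| > d|S|. -/
open MeasureTheory Filter Finset
open scoped ENNReal Classical

noncomputable section

variable {V : Type*}

/-! For `|S| = k ≤ n/2`, `|∂S|` counts which of the `k(n-k)` pairs across the cut are edges: a
sum of independent Bernoulli(`p`) variables. The exponential-moment bound `𝟙[X ≤ D] ≤ t^(X-D)` at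
`t = 1/2` gives `Pr[|∂S| ≤ dk] ≤ 2^(dk) e^(-pk(n-k)/2) ≤ e^(ck)` with `c = d log 2 - np/4`.
Rather than counting the sets of each size, Rankin's trick `𝟙[k ≥ K] ≤ e^(β(k-K))` together with
`∑_S x^|S| = (1+x)^n` bounds the failure probability by `exp(n e^(c+β) - βK)`. For `L = log n`,
`K = n/L` and `e^(c+β) = 1/L` this is `exp((n/L)(1 + c + log L))`, and
`np ≥ L - 2d - ω ≥ (1 - o(1)) L` makes it at most `exp(-n/5)`. -/

open Real

theorem measure_pi_card_filter_true_le {ι : Type*} [Fintype ι] (ν : Measure Bool)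
    [IsProbabilityMeasure ν] (E : Finset ι) (D : ℕ) {t : ℝ} (ht0 : 0 < t) (ht1 : t ≤ 1) :
    Measure.pi (fun _ : ι => ν) {ω | #{i ∈ E | ω i = true} ≤ D}
      ≤ ENNReal.ofReal ((1 - ν.real {true} * (1 - t)) ^ #E / t ^ D) := by
  set μ := Measure.pi (fun _ : ι => ν)
  set f : ι → Bool → ℝ := fun i b => if i ∈ E ∧ b = true then t else 1
  set g : (ι → Bool) → ℝ := fun ω => ∏ i, f i (ω i)
  have hg : ∀ ω, g ω = t ^ #{i ∈ E | ω i = true} := fun ω => by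
    calc g ω = ∏ i, if i ∈ {i ∈ E | ω i = true} then t else 1 := by simp [g, f]
      _ = _ := by rw [Finset.prod_ite_mem, univ_inter, prod_const]
  have hfalse : ν.real {false} = 1 - ν.real {true} := by
    rw [← probReal_compl_eq_one_sub (measurableSet_singleton _)]
    congr 1; ext b; cases b <;> simp
  have hint : ∫ ω, g ω ∂μ = (1 - ν.real {true} * (1 - t)) ^ #E := by
    calc ∫ ω, g ω ∂μ = ∏ i, if i ∈ E then 1 - ν.real {true} * (1 - t) else 1 := by
          rw [integral_fintype_prod_eq_prod]
          refine Finset.prod_congr rfl fun i _ => ?_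
          rw [integral_fintype .of_finite, Fintype.sum_bool, hfalse]
          split_ifs <;> simp [f, *]
          ring
      _ = _ := by rw [Finset.prod_ite_mem, univ_inter, prod_const]
  have hsub : {ω : ι → Bool | #{i ∈ E | ω i = true} ≤ D} ⊆ {ω | t ^ D ≤ g ω} := fun ω hω => by
    change t ^ D ≤ g ω
    rw [hg]
    exact pow_le_pow_of_le_one ht0.le ht1 hω
  have hmarkov := mul_meas_ge_le_integral_of_nonneg (μ := μ) (f := g)
    (Filter.Eventually.of_forall fun ω => by simp only [Pi.zero_apply, hg]; positivity)
    .of_finite (t ^ D)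
  rw [hint] at hmarkov
  calc μ _ ≤ μ {ω | t ^ D ≤ g ω} := measure_mono hsub
    _ = ENNReal.ofReal (μ.real {ω | t ^ D ≤ g ω}) := by rw [ofReal_measureReal]
    _ ≤ _ := by
        gcongr
        rwa [le_div_iff₀' (by positivity)]

section Cut
variable {V : Type*} [Fintype V] [DecidableEq V]

def cutEdges (S : Finset V) : Finset (Sym2 V) :=
  (S ×ˢ Sᶜ).image fun x => s(x.1, x.2)

theorem card_cutEdges (S : Finset V) : #(cutEdges S) = #S * #Sᶜ := by
  rw [cutEdges, card_image_of_injOn, card_product]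
  rintro ⟨a, b⟩ hab ⟨c, d⟩ hcd h
  simp only [coe_product, Set.mem_prod, mem_coe, mem_compl] at hab hcd
  rcases Sym2.eq_iff.1 h with ⟨rfl, rfl⟩ | ⟨rfl, rfl⟩
  · rfl
  · exact absurd hab.1 hcd.2

end Cut

theorem edgeBoundary_graphOf {n : ℕ} (ω : Sym2 (Fin n) → Bool) (S : Finset (Fin n)) :
    edgeBoundary (graphOf ω) S = {e ∈ cutEdges S | ω e = true} := by
  ext e
  simp only [edgeBoundary, cutEdges, mem_filter, SimpleGraph.mem_edgeFinset, mem_image,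
    mem_product, mem_compl, Prod.exists]
  constructor
  · rintro ⟨he, u, v, rfl, hu, hv⟩
    exact ⟨⟨u, v, ⟨hu, hv⟩, rfl⟩, he.2⟩
  · rintro ⟨⟨u, v, ⟨hu, hv⟩, rfl⟩, hω⟩
    exact ⟨⟨ne_of_mem_of_not_mem hu hv, hω⟩, u, v, rfl, hu, hv⟩

theorem graphMeasure_edgeBoundary_card_le {n : ℕ} {P : ℝ} (hP0 : 0 ≤ P) (hP1 : P ≤ 1) (δ : ℕ)
    {S : Finset (Fin n)} (hS : 2 * #S ≤ n) :
    graphMeasure n P {ω | #(edgeBoundary (graphOf ω) S) ≤ δ * #S}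
      ≤ ENNReal.ofReal (exp ((δ * log 2 - n * P / 4) * #S)) := by
  have hν : (PMF.bernoulli (min P.toNNReal 1) (min_le_right _ _)).toMeasure.real {true} = P := by
    simp [measureReal_def, PMF.bernoulli_apply, hP0, hP1]
  have hcut : (#(cutEdges S) : ℝ) = #S * (n - #S) := by
    rw [card_cutEdges, card_compl, Fintype.card_fin, Nat.cast_mul, Nat.cast_sub (by omega)]
  simp only [edgeBoundary_graphOf]
  refine (measure_pi_card_filter_true_le _ _ _ (by norm_num : (0:ℝ) < 1 / 2) (by norm_num)).trans ?_
  rw [hν]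
  refine ENNReal.ofReal_le_ofReal ?_
  calc (1 - P * (1 - 1 / 2)) ^ #(cutEdges S) / (1 / 2) ^ (δ * #S)
      ≤ exp (-(P / 2)) ^ #(cutEdges S) * 2 ^ (δ * #S) := by
        rw [one_div, inv_pow, div_inv_eq_mul]
        gcongr
        · linarith
        · linarith [one_sub_le_exp_neg (P / 2)]
    _ = exp (-(P / 2) * (#S * (n - #S)) + δ * #S * log 2) := by
        rw [exp_add, ← hcut, ← exp_nat_mul, ← rpow_natCast, rpow_def_of_pos two_pos]
        push_cast; ring_nf
    _ ≤ exp ((δ * log 2 - n * P / 4) * #S) := by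
        gcongr exp ?_
        have : (n : ℝ) / 2 ≤ n - #S := by
          have : (2 * #S : ℝ) ≤ n := by exact_mod_cast hS
          linarith
        nlinarith [mul_le_mul_of_nonneg_left this (mul_nonneg hP0 (Nat.cast_nonneg (α := ℝ) #S))]

theorem sum_exp_mul_card_le {α : Type*} [Fintype α] {T : Finset (Finset α)} {K : ℝ}
    (hT : ∀ t ∈ T, K ≤ #t) (c : ℝ) {β : ℝ} (hβ : 0 ≤ β) :
    ∑ t ∈ T, exp (c * #t) ≤ exp (Fintype.card α * exp (c + β) - β * K) := by
  calc ∑ t ∈ T, exp (c * #t) ≤ ∑ t ∈ T, exp (-(β * K)) * exp (c + β) ^ #t := by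
        refine sum_le_sum fun t ht => ?_
        rw [← exp_nat_mul, ← exp_add]
        gcongr
        nlinarith [hT t ht]
    _ ≤ ∑ t : Finset α, exp (-(β * K)) * exp (c + β) ^ #t :=
        sum_le_univ_sum_of_nonneg fun _ => by positivity
    _ = exp (-(β * K)) * (exp (c + β) + 1) ^ Fintype.card α := by
        rw [← mul_sum, ← card_univ, ← sum_pow_mul_eq_add_pow, powerset_univ]
        simp
    _ ≤ exp (-(β * K)) * exp (exp (c + β)) ^ Fintype.card α := by
        gcongr
        exact add_one_le_exp _
    _ = exp (Fintype.card α * exp (c + β) - β * K) := by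
        rw [← exp_nat_mul, ← exp_add]
        ring_nf

theorem graphMeasure_exists_small_edgeBoundary_le {n : ℕ} {P : ℝ} (hP0 : 0 ≤ P) (hP1 : P ≤ 1)
    (δ : ℕ) (K : ℝ) {β : ℝ} (hβ : 0 ≤ β) :
    graphMeasure n P {ω | ∃ S : Finset (Fin n),
        K ≤ #S ∧ 2 * #S ≤ n ∧ #(edgeBoundary (graphOf ω) S) ≤ δ * #S}
      ≤ ENNReal.ofReal (exp (n * exp (δ * log 2 - n * P / 4 + β) - β * K)) := by
  set T : Finset (Finset (Fin n)) := {S | K ≤ #S ∧ 2 * #S ≤ n}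
  have hsub : {ω | ∃ S : Finset (Fin n),
        K ≤ #S ∧ 2 * #S ≤ n ∧ #(edgeBoundary (graphOf ω) S) ≤ δ * #S}
      ⊆ ⋃ S ∈ T, {ω | #(edgeBoundary (graphOf ω) S) ≤ δ * #S} := by
    rintro ω ⟨S, hK, hn, hS⟩
    exact Set.mem_biUnion (by simp [T, hK, hn]) hS
  calc _ ≤ ∑ S ∈ T, graphMeasure n P {ω | #(edgeBoundary (graphOf ω) S) ≤ δ * #S} :=
        (measure_mono hsub).trans (measure_biUnion_finset_le _ _)
    _ ≤ ∑ S ∈ T, ENNReal.ofReal (exp ((δ * log 2 - n * P / 4) * #S)) :=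
        sum_le_sum fun S hS => graphMeasure_edgeBoundary_card_le hP0 hP1 δ (mem_filter.1 hS).2.2
    _ = ENNReal.ofReal (∑ S ∈ T, exp ((δ * log 2 - n * P / 4) * #S)) :=
        (ENNReal.ofReal_sum_of_nonneg fun _ _ => (exp_pos _).le).symm
    _ ≤ _ := by
        refine ENNReal.ofReal_le_ofReal ?_
        simpa using sum_exp_mul_card_le (T := T) (fun S hS => (mem_filter.1 hS).2.1) _ hβ

theorem eventually_mul_log_add_le (a b : ℝ) {c : ℝ} (hc : 0 < c) :
    ∀ᶠ x in atTop, a * log x + b ≤ c * x := by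
  have h : (fun x => a * log x + b) =o[atTop] id :=
    (isLittleO_log_id_atTop.const_mul_left a).add (Asymptotics.isLittleO_const_id_atTop b)
  filter_upwards [h.def hc, eventually_ge_atTop 0] with x hx hx0
  rw [id, norm_of_nonneg hx0] at hx
  exact (le_abs_self _).trans hx

-- `np` in the paper's notation, with `L = log n`, `r = L / δ` and `W = ω(n)`.
def expectedDegree (L : ℝ) (δ : ℕ) (W : ℝ) : ℝ :=
  L + (δ - 1) * log (L / δ) - (2 * δ + W)

section Parameters
variable {L : ℝ} {δ : ℕ}

-- For `δ = 0` these hold through the junk values `L / 0 = 0` and `log 0 = 0`.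
theorem sub_one_mul_log_div_nonneg (hδ : δ ≤ L) : 0 ≤ (δ - 1) * log (L / δ) := by
  rcases Nat.eq_zero_or_pos δ with rfl | hδ0
  · simp
  have hδ1 : (1 : ℝ) ≤ δ := by exact_mod_cast hδ0
  exact mul_nonneg (by linarith) (log_nonneg ((one_le_div (by linarith)).2 hδ))

theorem sub_one_mul_log_div_le (hL : 0 ≤ L) : (δ - 1) * log (L / δ) ≤ L := by
  rcases Nat.eq_zero_or_pos δ with rfl | hδ0
  · simpa using hL
  have hδ1 : (1 : ℝ) ≤ δ := by exact_mod_cast hδ0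
  calc (δ - 1) * log (L / δ) ≤ (δ - 1) * (L / δ) :=
        mul_le_mul_of_nonneg_left (log_le_self (by positivity)) (by linarith)
    _ ≤ δ * (L / δ) := by gcongr; linarith
    _ = L := by field_simp

theorem log_log_div_le_log (hL : 1 ≤ L) (hδ : δ ≤ L) : log (log (L / δ)) ≤ log L := by
  rcases Nat.eq_zero_or_pos δ with rfl | hδ0
  · simpa using log_nonneg hL
  have hδ1 : (1 : ℝ) ≤ δ := by exact_mod_cast hδ0
  calc log (log (L / δ)) ≤ log (L / δ) :=
        log_le_self (log_nonneg ((one_le_div (by linarith)).2 hδ))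
    _ ≤ log L := log_le_log (by positivity) (div_le_self (by linarith) hδ1)

theorem expectedDegree_bounds {W : ℝ} (hL : 1 ≤ L) (hLlog : 2 * log L + 1 ≤ L / 100)
    (hδ : δ ≤ L / 100) (hW0 : 0 ≤ W) (hW : W ≤ log (log (L / δ))) :
    0 ≤ expectedDegree L δ W ∧ expectedDegree L δ W ≤ 2 * L ∧
      δ * log 2 - expectedDegree L δ W / 4 + log L + 1 ≤ -(L / 5) := by
  unfold expectedDegree
  have hδL : (δ : ℝ) ≤ L := by linarith
  have h0 := sub_one_mul_log_div_nonneg hδL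
  have h1 := sub_one_mul_log_div_le (L := L) (δ := δ) (by linarith)
  have hWL := hW.trans (log_log_div_le_log hL hδL)
  have hlogL := log_nonneg hL
  have hlog2 : log 2 ≤ 1 := by linarith [log_two_lt_d9]
  have hδlog2 : δ * log 2 ≤ δ := mul_le_of_le_one_right δ.cast_nonneg hlog2
  exact ⟨by linarith, by linarith, by linarith⟩

end Parameters

theorem graphMeasure_exists_nonexpanding_le {n δ : ℕ} {W : ℝ} (hL : 1 ≤ log n)
    (hLlog : 2 * log (log n) + 1 ≤ log n / 100) (hn : 2 * log n ≤ n) (hδ : δ ≤ log n / 100)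
    (hW0 : 0 ≤ W) (hW : W ≤ log (log (log n / δ))) :
    graphMeasure n (expectedDegree (log n) δ W / n)
        {ω | ∃ S : Finset (Fin n), n / log n ≤ #S ∧ 2 * #S ≤ n ∧
          #(edgeBoundary (graphOf ω) S) ≤ δ * #S}
      ≤ ENNReal.ofReal (exp (-(1 / 5) * n)) := by
  set L := log n
  set Q := expectedDegree L δ W
  obtain ⟨hQ0, hQL, hc⟩ := expectedDegree_bounds hL hLlog hδ hW0 hW
  have hn0 : (0 : ℝ) < n := by linarith
  have hnP : n * (Q / n) = Q := by field_simp
  set c := δ * log 2 - Q / 4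
  refine (graphMeasure_exists_small_edgeBoundary_le (div_nonneg hQ0 hn0.le)
    ((div_le_one hn0).2 (by linarith)) δ (n / L) (β := -c - log L) (by linarith)).trans
    (ENNReal.ofReal_le_ofReal ?_)
  have hexp : exp (c + (-c - log L)) = L⁻¹ := by
    ring_nf
    rw [exp_neg, exp_log (by linarith)]
  rw [hnP, hexp]
  gcongr
  have hnL : 0 ≤ n / L := div_nonneg hn0.le (by linarith)
  calc n * L⁻¹ - (-c - log L) * (n / L) = n / L * (c + log L + 1) := by ring
    _ ≤ n / L * (-(L / 5)) := by gcongr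
    _ = -(1 / 5) * n := by field_simp

theorem large_sets_expand_general (d : ℕ → ℕ)
    (hd : (fun n : ℕ => (d n : ℝ)) =o[atTop] fun n : ℕ => Real.log n)
    (w : ℕ → ℝ) (hw : Tendsto w atTop atTop)
    (hwle : ∀ᶠ n : ℕ in atTop, w n ≤ Real.log (Real.log (Real.log n / (d n : ℝ)))) :
    ∃ f : ℕ → ℝ, f =o[atTop] (fun n : ℕ => (n : ℝ) ^ (-(1/5 : ℝ))) ∧
      ∀ᶠ n : ℕ in atTop, graphMeasure n
        ((Real.log n + ((d n : ℝ) - 1) * Real.log (Real.log n / (d n : ℝ))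
          - (2 * (d n : ℝ) + w n)) / n)
        {ω | ¬ ∀ S : Finset (Fin n), (n : ℝ) / Real.log n ≤ (S.card : ℝ) →
          2 * S.card ≤ n →
          (d n * S.card : ℝ) < ((edgeBoundary (graphOf ω) S).card : ℝ)}
        ≤ ENNReal.ofReal (f n) := by
  refine ⟨fun n => exp (-(1 / 5) * n), ?_, ?_⟩
  · exact (isLittleO_exp_neg_mul_rpow_atTop (by norm_num) _).comp_tendsto
      tendsto_natCast_atTop_atTop
  have hlog := tendsto_log_atTop.comp tendsto_natCast_atTop_atTop
  filter_upwards [hlog.eventually_ge_atTop 1,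
    hlog.eventually (eventually_mul_log_add_le 2 1 (by norm_num : (0 : ℝ) < 1 / 100)),
    tendsto_natCast_atTop_atTop.eventually (eventually_mul_log_add_le 2 0 one_pos),
    hd.def (by norm_num : (0 : ℝ) < 1 / 100), hw.eventually_ge_atTop 0, hwle]
    with n hL hLlog hn hδ hW0 hW
  simp only [Function.comp_apply, norm_natCast, norm_of_nonneg (log_natCast_nonneg n)]
    at hL hLlog hn hδ
  refine (measure_mono fun ω hω => ?_).trans
    (graphMeasure_exists_nonexpanding_le hL (by linarith) (by linarith) (by linarith) hW0 hW)
  push Not at hω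
  obtain ⟨S, hK, hS, hcut⟩ := hω
  exact ⟨S, hK, hS, by exact_mod_cast hcut⟩

/-- with `p = (log n + (d-1)log r - (2d + ω(n)))/n`, with
probability `1 - o(n^{-1/5})` every vertex set `S` of `G(n,p)` with
`n/log n ≤ |S| ≤ n/2` satisfies `|∂S| > d|S|`. -/
theorem large_sets_expand (d : ℕ → ℕ) (hd1 : ∀ n, 1 ≤ d n)
    (hd : (fun n : ℕ => (d n : ℝ)) =o[atTop] fun n : ℕ => Real.log n)
    (w : ℕ → ℝ) (hw : Tendsto w atTop atTop)
    (hwle : ∀ᶠ n : ℕ in atTop, w n ≤ Real.log (Real.log (Real.log n / (d n : ℝ)))) :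
    ∃ f : ℕ → ℝ, f =o[atTop] (fun n : ℕ => (n : ℝ) ^ (-(1/5 : ℝ))) ∧
      ∀ᶠ n : ℕ in atTop, graphMeasure n
        ((Real.log n + ((d n : ℝ) - 1) * Real.log (Real.log n / (d n : ℝ))
          - (2 * (d n : ℝ) + w n)) / n)
        {ω | ¬ ∀ S : Finset (Fin n), (n : ℝ) / Real.log n ≤ (S.card : ℝ) →
          2 * S.card ≤ n →
          (d n * S.card : ℝ) < ((edgeBoundary (graphOf ω) S).card : ℝ)}
        ≤ ENNReal.ofReal (f n) :=
  large_sets_expand_general d hd w hw hwle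

end
end
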